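/- arXiv:2001.06336 — 4 statements merged into one kernel-verified Lean document; each statement's English description precedes it below -/
import Mathlib

section
/- (Theorem 1, moment resultant of the derivative field.) If u : ℝ² → ℝ³ is a smooth map, s̄-periodic in s, satisfying the three equilibrium equations on ℝ², then ℳ(∂u/∂z) = (ℛ₂(u), −ℛ₁(u), 0); in particular the axial component ℳ₃(∂u/∂z) vanishes and ℳ_α(∂u/∂z) = e_{αβ}ℛ_β(u) for α = 1, 2. -/
open Real MeasureTheory intervalIntegral

noncomputable section

/-- Standard basis vector e₁ of ℝ³. -/
def e1 : Fin 3 → ℝ := ![1, 0, 0]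
/-- Standard basis vector e₂ of ℝ³. -/
def e2 : Fin 3 → ℝ := ![0, 1, 0]
/-- Standard basis vector e₃ of ℝ³. -/
def e3 : Fin 3 → ℝ := ![0, 0, 1]

/-- Euclidean dot product on ℝ³. -/
def dot3 (v w : Fin 3 → ℝ) : ℝ := v 0 * w 0 + v 1 * w 1 + v 2 * w 2

/-- Cross product on ℝ³. -/
def cross3 (a b : Fin 3 → ℝ) : Fin 3 → ℝ :=
  ![a 1 * b 2 - a 2 * b 1, a 2 * b 0 - a 0 * b 2, a 0 * b 1 - a 1 * b 0]

/-- Unit tangent τ(s) = (x₁'(s), x₂'(s), 0). -/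
def tau (x₁ x₂ : ℝ → ℝ) (s : ℝ) : Fin 3 → ℝ := ![deriv x₁ s, deriv x₂ s, 0]

/-- Unit normal n(s) = (x₂'(s), −x₁'(s), 0). -/
def nrm (x₁ x₂ : ℝ → ℝ) (s : ℝ) : Fin 3 → ℝ := ![deriv x₂ s, -deriv x₁ s, 0]

/-- Curvature κ(s) = x₁'(s)x₂''(s) − x₂'(s)x₁''(s). -/
def kap (x₁ x₂ : ℝ → ℝ) (s : ℝ) : ℝ :=
  deriv x₁ s * deriv (deriv x₂) s - deriv x₂ s * deriv (deriv x₁) s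

/-- Position vector r(s, z) = (x₁(s), x₂(s), z). -/
def pos (x₁ x₂ : ℝ → ℝ) (s z : ℝ) : Fin 3 → ℝ := ![x₁ s, x₂ s, z]

/-- The vector r̂(s) = (x₁(s), x₂(s), s̄). -/
def rhat (x₁ x₂ : ℝ → ℝ) (sbar s : ℝ) : Fin 3 → ℝ := ![x₁ s, x₂ s, sbar]

/-- Enclosed area 𝒜 = (1/2)∫₀^{s̄} (x₁x₂' − x₂x₁'). -/
def area2 (x₁ x₂ : ℝ → ℝ) (sbar : ℝ) : ℝ :=
  (1 / 2) * ∫ s in (0:ℝ)..sbar, (x₁ s * deriv x₂ s - x₂ s * deriv x₁ s)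

/-- Torsion function φ(s) = (2𝒜/s̄)s − ∫₀^s (x₁x₂' − x₂x₁'). -/
def tors (x₁ x₂ : ℝ → ℝ) (sbar s : ℝ) : ℝ :=
  (2 * area2 x₁ x₂ sbar / sbar) * s
    - ∫ σ in (0:ℝ)..s, (x₁ σ * deriv x₂ σ - x₂ σ * deriv x₁ σ)

/-- Partial derivative in `s` of an ℝ³-valued field. -/
def pds (u : ℝ → ℝ → Fin 3 → ℝ) (s z : ℝ) : Fin 3 → ℝ := deriv (fun t => u t z) s
/-- Partial derivative in `z` of an ℝ³-valued field. -/
def pdz (u : ℝ → ℝ → Fin 3 → ℝ) (s z : ℝ) : Fin 3 → ℝ := deriv (fun t => u s t) z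
/-- Partial derivative in `s` of a scalar field. -/
def sds (f : ℝ → ℝ → ℝ) (s z : ℝ) : ℝ := deriv (fun t => f t z) s
/-- Partial derivative in `z` of a scalar field. -/
def sdz (f : ℝ → ℝ → ℝ) (s z : ℝ) : ℝ := deriv (fun t => f s t) z

/-- Koiter strain ε_ss = ∂u/∂s · τ. -/
def epsSS (x₁ x₂ : ℝ → ℝ) (u : ℝ → ℝ → Fin 3 → ℝ) (s z : ℝ) : ℝ :=
  dot3 (pds u s z) (tau x₁ x₂ s)
/-- Koiter strain ε_sz = (1/2)(∂u/∂z · τ + ∂u/∂s · e₃). -/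
def epsSZ (x₁ x₂ : ℝ → ℝ) (u : ℝ → ℝ → Fin 3 → ℝ) (s z : ℝ) : ℝ :=
  (1 / 2) * (dot3 (pdz u s z) (tau x₁ x₂ s) + dot3 (pds u s z) e3)
/-- Koiter strain ε_zz = ∂u/∂z · e₃. -/
def epsZZ (u : ℝ → ℝ → Fin 3 → ℝ) (s z : ℝ) : ℝ := dot3 (pdz u s z) e3
/-- Koiter strain ρ_ss = ∂²u/∂s² · n. -/
def rhoSS (x₁ x₂ : ℝ → ℝ) (u : ℝ → ℝ → Fin 3 → ℝ) (s z : ℝ) : ℝ :=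
  dot3 (pds (pds u) s z) (nrm x₁ x₂ s)
/-- Koiter strain ρ_sz = ∂²u/∂s∂z · n. -/
def rhoSZ (x₁ x₂ : ℝ → ℝ) (u : ℝ → ℝ → Fin 3 → ℝ) (s z : ℝ) : ℝ :=
  dot3 (pds (pdz u) s z) (nrm x₁ x₂ s)
/-- Koiter strain ρ_zz = ∂²u/∂z² · n. -/
def rhoZZ (x₁ x₂ : ℝ → ℝ) (u : ℝ → ℝ → Fin 3 → ℝ) (s z : ℝ) : ℝ :=
  dot3 (pdz (pdz u) s z) (nrm x₁ x₂ s)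

/-- Stress N_ss = C(ε_ss + νε_zz). -/
def Nss (C ν : ℝ) (x₁ x₂ : ℝ → ℝ) (u : ℝ → ℝ → Fin 3 → ℝ) (s z : ℝ) : ℝ :=
  C * (epsSS x₁ x₂ u s z + ν * epsZZ u s z)
/-- Stress N_sz = C(1 − ν)ε_sz. -/
def Nsz (C ν : ℝ) (x₁ x₂ : ℝ → ℝ) (u : ℝ → ℝ → Fin 3 → ℝ) (s z : ℝ) : ℝ :=
  C * (1 - ν) * epsSZ x₁ x₂ u s z
/-- Stress N_zz = C(νε_ss + ε_zz). -/
def Nzz (C ν : ℝ) (x₁ x₂ : ℝ → ℝ) (u : ℝ → ℝ → Fin 3 → ℝ) (s z : ℝ) : ℝ :=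
  C * (ν * epsSS x₁ x₂ u s z + epsZZ u s z)
/-- Couple stress M_ss = D(ρ_ss + νρ_zz). -/
def Mss (D ν : ℝ) (x₁ x₂ : ℝ → ℝ) (u : ℝ → ℝ → Fin 3 → ℝ) (s z : ℝ) : ℝ :=
  D * (rhoSS x₁ x₂ u s z + ν * rhoZZ x₁ x₂ u s z)
/-- Couple stress M_sz = D(1 − ν)ρ_sz. -/
def Msz (D ν : ℝ) (x₁ x₂ : ℝ → ℝ) (u : ℝ → ℝ → Fin 3 → ℝ) (s z : ℝ) : ℝ :=
  D * (1 - ν) * rhoSZ x₁ x₂ u s z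
/-- Couple stress M_zz = D(νρ_ss + ρ_zz). -/
def Mzz (D ν : ℝ) (x₁ x₂ : ℝ → ℝ) (u : ℝ → ℝ → Fin 3 → ℝ) (s z : ℝ) : ℝ :=
  D * (ν * rhoSS x₁ x₂ u s z + rhoZZ x₁ x₂ u s z)

/-- Traction P_ss = N_ss − κM_ss. -/
def Pss (C D ν : ℝ) (x₁ x₂ : ℝ → ℝ) (u : ℝ → ℝ → Fin 3 → ℝ) (s z : ℝ) : ℝ :=
  Nss C ν x₁ x₂ u s z - kap x₁ x₂ s * Mss D ν x₁ x₂ u s z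
/-- Traction P_sz = N_sz − κM_sz. -/
def Psz (C D ν : ℝ) (x₁ x₂ : ℝ → ℝ) (u : ℝ → ℝ → Fin 3 → ℝ) (s z : ℝ) : ℝ :=
  Nsz C ν x₁ x₂ u s z - kap x₁ x₂ s * Msz D ν x₁ x₂ u s z
/-- Traction P_zs = N_sz. -/
def Pzs (C ν : ℝ) (x₁ x₂ : ℝ → ℝ) (u : ℝ → ℝ → Fin 3 → ℝ) (s z : ℝ) : ℝ :=
  Nsz C ν x₁ x₂ u s z
/-- Traction P_zz = N_zz. -/
def Pzz (C ν : ℝ) (x₁ x₂ : ℝ → ℝ) (u : ℝ → ℝ → Fin 3 → ℝ) (s z : ℝ) : ℝ :=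
  Nzz C ν x₁ x₂ u s z
/-- Transverse shear S_s = −∂M_ss/∂s − ∂M_sz/∂z. -/
def Ssf (D ν : ℝ) (x₁ x₂ : ℝ → ℝ) (u : ℝ → ℝ → Fin 3 → ℝ) (s z : ℝ) : ℝ :=
  -sds (Mss D ν x₁ x₂ u) s z - sdz (Msz D ν x₁ x₂ u) s z
/-- Transverse shear S_z = −∂M_sz/∂s − ∂M_zz/∂z. -/
def Szf (D ν : ℝ) (x₁ x₂ : ℝ → ℝ) (u : ℝ → ℝ → Fin 3 → ℝ) (s z : ℝ) : ℝ :=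
  -sds (Msz D ν x₁ x₂ u) s z - sdz (Mzz D ν x₁ x₂ u) s z

/-- The three Koiter equilibrium equations at (s, z). -/
def Equilib (C D ν : ℝ) (x₁ x₂ : ℝ → ℝ) (u : ℝ → ℝ → Fin 3 → ℝ) (s z : ℝ) : Prop :=
  sds (Pss C D ν x₁ x₂ u) s z + sdz (Psz C D ν x₁ x₂ u) s z
      + kap x₁ x₂ s * Ssf D ν x₁ x₂ u s z = 0 ∧
  sds (Pzs C ν x₁ x₂ u) s z + sdz (Pzz C ν x₁ x₂ u) s z = 0 ∧
  sds (Ssf D ν x₁ x₂ u) s z + sdz (Szf D ν x₁ x₂ u) s z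
      - kap x₁ x₂ s * Pss C D ν x₁ x₂ u s z = 0

/-- Resultant force functional ℛ(u) on the end edge C₀. -/
def Rres (C D ν : ℝ) (x₁ x₂ : ℝ → ℝ) (sbar : ℝ) (u : ℝ → ℝ → Fin 3 → ℝ) : Fin 3 → ℝ :=
  -∫ s in (0:ℝ)..sbar,
    (Psz C D ν x₁ x₂ u s 0 • tau x₁ x₂ s + Pzz C ν x₁ x₂ u s 0 • e3
      + Szf D ν x₁ x₂ u s 0 • nrm x₁ x₂ s)

/-- Resultant moment functional ℳ(u) on the end edge C₀. -/
def Mres (C D ν : ℝ) (x₁ x₂ : ℝ → ℝ) (sbar : ℝ) (u : ℝ → ℝ → Fin 3 → ℝ) : Fin 3 → ℝ :=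
  -∫ s in (0:ℝ)..sbar,
    (cross3 (pos x₁ x₂ s 0)
        (Psz C D ν x₁ x₂ u s 0 • tau x₁ x₂ s + Pzz C ν x₁ x₂ u s 0 • e3
          + Szf D ν x₁ x₂ u s 0 • nrm x₁ x₂ s)
      - Msz D ν x₁ x₂ u s 0 • e3 + Mzz D ν x₁ x₂ u s 0 • tau x₁ x₂ s)

section TwoVar
variable {E : Type*} [NormedAddCommGroup E] [NormedSpace ℝ E]

theorem hasDerivAt_fst2 (f : ℝ → ℝ → E)
    (hf : Differentiable ℝ (fun p : ℝ × ℝ => f p.1 p.2)) (s z : ℝ) :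
    HasDerivAt (fun t => f t z)
      (fderiv ℝ (fun p : ℝ × ℝ => f p.1 p.2) (s, z) (1, 0)) s := by
  have h1 : HasDerivAt (fun t : ℝ => ((t, z) : ℝ × ℝ)) ((1:ℝ), (0:ℝ)) s :=
    HasDerivAt.prodMk (hasDerivAt_id s) (hasDerivAt_const s z)
  exact (hf (s, z)).hasFDerivAt.comp_hasDerivAt s h1

theorem hasDerivAt_snd2 (f : ℝ → ℝ → E)
    (hf : Differentiable ℝ (fun p : ℝ × ℝ => f p.1 p.2)) (s z : ℝ) :
    HasDerivAt (fun t => f s t)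
      (fderiv ℝ (fun p : ℝ × ℝ => f p.1 p.2) (s, z) (0, 1)) z := by
  have h1 : HasDerivAt (fun t : ℝ => ((s, t) : ℝ × ℝ)) ((0:ℝ), (1:ℝ)) z :=
    HasDerivAt.prodMk (hasDerivAt_const z s) (hasDerivAt_id z)
  exact (hf (s, z)).hasFDerivAt.comp_hasDerivAt z h1

theorem contDiff_fderiv_apply2 (f : ℝ → ℝ → E)
    (hf : ContDiff ℝ (⊤ : ℕ∞) fun p : ℝ × ℝ => f p.1 p.2) (v : ℝ × ℝ) :
    ContDiff ℝ (⊤ : ℕ∞) (fun p : ℝ × ℝ => fderiv ℝ (fun q : ℝ × ℝ => f q.1 q.2) p v) := by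
  have h := hf.fderiv_right (m := (⊤ : ℕ∞)) (by simp)
  exact (ContinuousLinearMap.apply ℝ E v).contDiff.comp h

theorem contDiff_pds2 (f : ℝ → ℝ → E)
    (hf : ContDiff ℝ (⊤ : ℕ∞) fun p : ℝ × ℝ => f p.1 p.2) :
    ContDiff ℝ (⊤ : ℕ∞) (fun p : ℝ × ℝ => deriv (fun t => f t p.2) p.1) := by
  have h : (fun p : ℝ × ℝ => deriv (fun t => f t p.2) p.1)
      = fun p : ℝ × ℝ => fderiv ℝ (fun q : ℝ × ℝ => f q.1 q.2) p ((1:ℝ),(0:ℝ)) := by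
    funext p; exact (hasDerivAt_fst2 f (hf.differentiable (by simp)) p.1 p.2).deriv
  rw [h]; exact contDiff_fderiv_apply2 f hf _

theorem contDiff_pdz2 (f : ℝ → ℝ → E)
    (hf : ContDiff ℝ (⊤ : ℕ∞) fun p : ℝ × ℝ => f p.1 p.2) :
    ContDiff ℝ (⊤ : ℕ∞) (fun p : ℝ × ℝ => deriv (fun t => f p.1 t) p.2) := by
  have h : (fun p : ℝ × ℝ => deriv (fun t => f p.1 t) p.2)
      = fun p : ℝ × ℝ => fderiv ℝ (fun q : ℝ × ℝ => f q.1 q.2) p ((0:ℝ),(1:ℝ)) := by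
    funext p; exact (hasDerivAt_snd2 f (hf.differentiable (by simp)) p.1 p.2).deriv
  rw [h]; exact contDiff_fderiv_apply2 f hf _

theorem deriv_swap2 (f : ℝ → ℝ → E)
    (hf : ContDiff ℝ (⊤ : ℕ∞) fun p : ℝ × ℝ => f p.1 p.2) (s z : ℝ) :
    deriv (fun t => deriv (fun w => f t w) z) s
      = deriv (fun w => deriv (fun t => f t w) s) z := by
  set F : ℝ × ℝ → E := fun p => f p.1 p.2 with hF
  have hdF : Differentiable ℝ F := hf.differentiable (by simp)
  have hdF' : Differentiable ℝ (fderiv ℝ F) :=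
    (hf.fderiv_right (m := 1) (WithTop.coe_le_coe.mpr le_top)).differentiable one_ne_zero
  have hsnd : HasFDerivAt (fderiv ℝ F) (fderiv ℝ (fderiv ℝ F) (s,z)) (s,z) :=
    (hdF' (s,z)).hasFDerivAt
  -- LHS
  have h1 : (fun t => deriv (fun w => f t w) z) = fun t => fderiv ℝ F (t, z) ((0:ℝ),(1:ℝ)) := by
    funext t; exact (hasDerivAt_snd2 f hdF t z).deriv
  have h2 : (fun w => deriv (fun t => f t w) s) = fun w => fderiv ℝ F (s, w) ((1:ℝ),(0:ℝ)) := by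
    funext w; exact (hasDerivAt_fst2 f hdF s w).deriv
  have hc1 : HasFDerivAt (fun p : ℝ × ℝ => fderiv ℝ F p ((0:ℝ),(1:ℝ)))
      ((ContinuousLinearMap.apply ℝ E ((0:ℝ),(1:ℝ))).comp (fderiv ℝ (fderiv ℝ F) (s,z))) (s,z) :=
    (ContinuousLinearMap.apply ℝ E ((0:ℝ),(1:ℝ))).hasFDerivAt.comp (s,z) hsnd
  have hc2 : HasFDerivAt (fun p : ℝ × ℝ => fderiv ℝ F p ((1:ℝ),(0:ℝ)))
      ((ContinuousLinearMap.apply ℝ E ((1:ℝ),(0:ℝ))).comp (fderiv ℝ (fderiv ℝ F) (s,z))) (s,z) :=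
    (ContinuousLinearMap.apply ℝ E ((1:ℝ),(0:ℝ))).hasFDerivAt.comp (s,z) hsnd
  have e1 : deriv (fun t => deriv (fun w => f t w) z) s
      = fderiv ℝ (fderiv ℝ F) (s,z) ((1:ℝ),(0:ℝ)) ((0:ℝ),(1:ℝ)) := by
    rw [h1]
    have := (hc1.comp_hasDerivAt s (HasDerivAt.prodMk (hasDerivAt_id s) (hasDerivAt_const s z))).deriv
    simpa [Function.comp_def] using this
  have e2 : deriv (fun w => deriv (fun t => f t w) s) z
      = fderiv ℝ (fderiv ℝ F) (s,z) ((0:ℝ),(1:ℝ)) ((1:ℝ),(0:ℝ)) := by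
    rw [h2]
    have := (hc2.comp_hasDerivAt z (HasDerivAt.prodMk (hasDerivAt_const z s) (hasDerivAt_id z))).deriv
    simpa [Function.comp_def] using this
  rw [e1, e2]
  exact (hf.contDiffAt.isSymmSndFDerivAt (by
    rw [minSmoothness_of_isRCLikeNormedField]; exact WithTop.coe_le_coe.mpr le_top)) _ _

end TwoVar

/-- Uncurry. -/
def unc {α : Type*} (f : ℝ → ℝ → α) : ℝ × ℝ → α := fun p => f p.1 p.2

section Smooth

theorem ContDiff.deriv_top {E : Type*} [NormedAddCommGroup E] [NormedSpace ℝ E]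
    {f : ℝ → E} (hf : ContDiff ℝ (⊤ : ℕ∞) f) : ContDiff ℝ (⊤ : ℕ∞) (deriv f) :=
  (ContinuousLinearMap.apply ℝ E (1:ℝ)).contDiff.comp (hf.fderiv_right (by simp))

variable {x₁ x₂ : ℝ → ℝ}

theorem contDiff_tau (hx₁ : ContDiff ℝ (⊤ : ℕ∞) x₁) (hx₂ : ContDiff ℝ (⊤ : ℕ∞) x₂) :
    ContDiff ℝ (⊤ : ℕ∞) (tau x₁ x₂) := by
  rw [contDiff_pi]
  intro i
  fin_cases i
  · simpa [tau] using hx₁.deriv_top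
  · simpa [tau] using hx₂.deriv_top
  · simpa [tau] using contDiff_const

theorem contDiff_nrm (hx₁ : ContDiff ℝ (⊤ : ℕ∞) x₁) (hx₂ : ContDiff ℝ (⊤ : ℕ∞) x₂) :
    ContDiff ℝ (⊤ : ℕ∞) (nrm x₁ x₂) := by
  rw [contDiff_pi]
  intro i
  fin_cases i
  · simpa [nrm] using hx₂.deriv_top
  · simpa [nrm] using hx₁.deriv_top.neg
  · simpa [nrm] using contDiff_const

theorem contDiff_kap (hx₁ : ContDiff ℝ (⊤ : ℕ∞) x₁) (hx₂ : ContDiff ℝ (⊤ : ℕ∞) x₂) :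
    ContDiff ℝ (⊤ : ℕ∞) (kap x₁ x₂) :=
  (hx₁.deriv_top.mul hx₂.deriv_top.deriv_top).sub
    (hx₂.deriv_top.mul hx₁.deriv_top.deriv_top)

theorem contDiff_dot3L {V : ℝ → ℝ → Fin 3 → ℝ} (hV : ContDiff ℝ (⊤ : ℕ∞) (unc V))
    {W : ℝ → Fin 3 → ℝ} (hW : ContDiff ℝ (⊤ : ℕ∞) W) :
    ContDiff ℝ (⊤ : ℕ∞) (fun p : ℝ × ℝ => dot3 (V p.1 p.2) (W p.1)) := by
  have hv := fun i => (contDiff_pi.mp hV) i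
  have hw := fun i => ((contDiff_pi.mp hW) i).comp (contDiff_fst (E := ℝ) (F := ℝ))
  exact (((hv 0).mul (hw 0)).add ((hv 1).mul (hw 1))).add ((hv 2).mul (hw 2))

variable {u : ℝ → ℝ → Fin 3 → ℝ}

theorem contDiff_pdsu (hu : ContDiff ℝ (⊤ : ℕ∞) (unc u)) : ContDiff ℝ (⊤ : ℕ∞) (unc (pds u)) :=
  contDiff_pds2 u hu
theorem contDiff_pdzu (hu : ContDiff ℝ (⊤ : ℕ∞) (unc u)) : ContDiff ℝ (⊤ : ℕ∞) (unc (pdz u)) :=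
  contDiff_pdz2 u hu
theorem contDiff_sdsu {f : ℝ → ℝ → ℝ} (hf : ContDiff ℝ (⊤ : ℕ∞) (unc f)) :
    ContDiff ℝ (⊤ : ℕ∞) (unc (sds f)) := contDiff_pds2 f hf
theorem contDiff_sdzu {f : ℝ → ℝ → ℝ} (hf : ContDiff ℝ (⊤ : ℕ∞) (unc f)) :
    ContDiff ℝ (⊤ : ℕ∞) (unc (sdz f)) := contDiff_pdz2 f hf

theorem contDiff_epsSS (hx₁ : ContDiff ℝ (⊤ : ℕ∞) x₁) (hx₂ : ContDiff ℝ (⊤ : ℕ∞) x₂)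
    (hu : ContDiff ℝ (⊤ : ℕ∞) (unc u)) : ContDiff ℝ (⊤ : ℕ∞) (unc (epsSS x₁ x₂ u)) :=
  contDiff_dot3L (contDiff_pdsu hu) (contDiff_tau hx₁ hx₂)

theorem contDiff_epsZZ (hu : ContDiff ℝ (⊤ : ℕ∞) (unc u)) : ContDiff ℝ (⊤ : ℕ∞) (unc (epsZZ u)) :=
  contDiff_dot3L (contDiff_pdzu hu) (contDiff_const (c := e3))

theorem contDiff_epsSZ (hx₁ : ContDiff ℝ (⊤ : ℕ∞) x₁) (hx₂ : ContDiff ℝ (⊤ : ℕ∞) x₂)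
    (hu : ContDiff ℝ (⊤ : ℕ∞) (unc u)) : ContDiff ℝ (⊤ : ℕ∞) (unc (epsSZ x₁ x₂ u)) := by
  have h1 := contDiff_dot3L (contDiff_pdzu hu) (contDiff_tau hx₁ hx₂)
  have h2 := contDiff_dot3L (contDiff_pdsu hu) (contDiff_const (c := e3))
  exact contDiff_const.mul (h1.add h2)

theorem contDiff_rhoSS (hx₁ : ContDiff ℝ (⊤ : ℕ∞) x₁) (hx₂ : ContDiff ℝ (⊤ : ℕ∞) x₂)
    (hu : ContDiff ℝ (⊤ : ℕ∞) (unc u)) : ContDiff ℝ (⊤ : ℕ∞) (unc (rhoSS x₁ x₂ u)) :=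
  contDiff_dot3L (contDiff_pdsu (contDiff_pdsu hu)) (contDiff_nrm hx₁ hx₂)

theorem contDiff_rhoSZ (hx₁ : ContDiff ℝ (⊤ : ℕ∞) x₁) (hx₂ : ContDiff ℝ (⊤ : ℕ∞) x₂)
    (hu : ContDiff ℝ (⊤ : ℕ∞) (unc u)) : ContDiff ℝ (⊤ : ℕ∞) (unc (rhoSZ x₁ x₂ u)) :=
  contDiff_dot3L (contDiff_pdsu (contDiff_pdzu hu)) (contDiff_nrm hx₁ hx₂)

theorem contDiff_rhoZZ (hx₁ : ContDiff ℝ (⊤ : ℕ∞) x₁) (hx₂ : ContDiff ℝ (⊤ : ℕ∞) x₂)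
    (hu : ContDiff ℝ (⊤ : ℕ∞) (unc u)) : ContDiff ℝ (⊤ : ℕ∞) (unc (rhoZZ x₁ x₂ u)) :=
  contDiff_dot3L (contDiff_pdzu (contDiff_pdzu hu)) (contDiff_nrm hx₁ hx₂)

variable {C D ν : ℝ}

theorem contDiff_Nss (hx₁ : ContDiff ℝ (⊤ : ℕ∞) x₁) (hx₂ : ContDiff ℝ (⊤ : ℕ∞) x₂)
    (hu : ContDiff ℝ (⊤ : ℕ∞) (unc u)) : ContDiff ℝ (⊤ : ℕ∞) (unc (Nss C ν x₁ x₂ u)) :=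
  contDiff_const.mul ((contDiff_epsSS hx₁ hx₂ hu).add (contDiff_const.mul (contDiff_epsZZ hu)))

theorem contDiff_Nsz (hx₁ : ContDiff ℝ (⊤ : ℕ∞) x₁) (hx₂ : ContDiff ℝ (⊤ : ℕ∞) x₂)
    (hu : ContDiff ℝ (⊤ : ℕ∞) (unc u)) : ContDiff ℝ (⊤ : ℕ∞) (unc (Nsz C ν x₁ x₂ u)) :=
  contDiff_const.mul (contDiff_epsSZ hx₁ hx₂ hu)

theorem contDiff_Nzz (hx₁ : ContDiff ℝ (⊤ : ℕ∞) x₁) (hx₂ : ContDiff ℝ (⊤ : ℕ∞) x₂)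
    (hu : ContDiff ℝ (⊤ : ℕ∞) (unc u)) : ContDiff ℝ (⊤ : ℕ∞) (unc (Nzz C ν x₁ x₂ u)) :=
  contDiff_const.mul ((contDiff_const.mul (contDiff_epsSS hx₁ hx₂ hu)).add (contDiff_epsZZ hu))

theorem contDiff_Mss (hx₁ : ContDiff ℝ (⊤ : ℕ∞) x₁) (hx₂ : ContDiff ℝ (⊤ : ℕ∞) x₂)
    (hu : ContDiff ℝ (⊤ : ℕ∞) (unc u)) : ContDiff ℝ (⊤ : ℕ∞) (unc (Mss D ν x₁ x₂ u)) :=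
  contDiff_const.mul ((contDiff_rhoSS hx₁ hx₂ hu).add (contDiff_const.mul (contDiff_rhoZZ hx₁ hx₂ hu)))

theorem contDiff_Msz (hx₁ : ContDiff ℝ (⊤ : ℕ∞) x₁) (hx₂ : ContDiff ℝ (⊤ : ℕ∞) x₂)
    (hu : ContDiff ℝ (⊤ : ℕ∞) (unc u)) : ContDiff ℝ (⊤ : ℕ∞) (unc (Msz D ν x₁ x₂ u)) :=
  contDiff_const.mul (contDiff_rhoSZ hx₁ hx₂ hu)

theorem contDiff_Mzz (hx₁ : ContDiff ℝ (⊤ : ℕ∞) x₁) (hx₂ : ContDiff ℝ (⊤ : ℕ∞) x₂)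
    (hu : ContDiff ℝ (⊤ : ℕ∞) (unc u)) : ContDiff ℝ (⊤ : ℕ∞) (unc (Mzz D ν x₁ x₂ u)) :=
  contDiff_const.mul ((contDiff_const.mul (contDiff_rhoSS hx₁ hx₂ hu)).add (contDiff_rhoZZ hx₁ hx₂ hu))

theorem contDiff_Pss (hx₁ : ContDiff ℝ (⊤ : ℕ∞) x₁) (hx₂ : ContDiff ℝ (⊤ : ℕ∞) x₂)
    (hu : ContDiff ℝ (⊤ : ℕ∞) (unc u)) : ContDiff ℝ (⊤ : ℕ∞) (unc (Pss C D ν x₁ x₂ u)) :=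
  (contDiff_Nss hx₁ hx₂ hu).sub
    (((contDiff_kap hx₁ hx₂).comp contDiff_fst).mul (contDiff_Mss hx₁ hx₂ hu))

theorem contDiff_Psz (hx₁ : ContDiff ℝ (⊤ : ℕ∞) x₁) (hx₂ : ContDiff ℝ (⊤ : ℕ∞) x₂)
    (hu : ContDiff ℝ (⊤ : ℕ∞) (unc u)) : ContDiff ℝ (⊤ : ℕ∞) (unc (Psz C D ν x₁ x₂ u)) :=
  (contDiff_Nsz hx₁ hx₂ hu).sub
    (((contDiff_kap hx₁ hx₂).comp contDiff_fst).mul (contDiff_Msz hx₁ hx₂ hu))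

theorem contDiff_Ssf (hx₁ : ContDiff ℝ (⊤ : ℕ∞) x₁) (hx₂ : ContDiff ℝ (⊤ : ℕ∞) x₂)
    (hu : ContDiff ℝ (⊤ : ℕ∞) (unc u)) : ContDiff ℝ (⊤ : ℕ∞) (unc (Ssf D ν x₁ x₂ u)) :=
  ((contDiff_sdsu (contDiff_Mss hx₁ hx₂ hu)).neg).sub
    (contDiff_sdzu (contDiff_Msz hx₁ hx₂ hu))

theorem contDiff_Szf (hx₁ : ContDiff ℝ (⊤ : ℕ∞) x₁) (hx₂ : ContDiff ℝ (⊤ : ℕ∞) x₂)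
    (hu : ContDiff ℝ (⊤ : ℕ∞) (unc u)) : ContDiff ℝ (⊤ : ℕ∞) (unc (Szf D ν x₁ x₂ u)) :=
  ((contDiff_sdsu (contDiff_Msz hx₁ hx₂ hu)).neg).sub
    (contDiff_sdzu (contDiff_Mzz hx₁ hx₂ hu))

end Smooth

section DerivId

variable {x₁ x₂ : ℝ → ℝ} {u : ℝ → ℝ → Fin 3 → ℝ} {C D ν : ℝ}

theorem hasDerivAt_sdz {f : ℝ → ℝ → ℝ} (hf : ContDiff ℝ (⊤ : ℕ∞) (unc f)) (s z : ℝ) :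
    HasDerivAt (fun t => f s t) (sdz f s z) z := by
  exact (hasDerivAt_snd2 f (hf.differentiable (by simp)) s z).differentiableAt.hasDerivAt

theorem hasDerivAt_sds {f : ℝ → ℝ → ℝ} (hf : ContDiff ℝ (⊤ : ℕ∞) (unc f)) (s z : ℝ) :
    HasDerivAt (fun t => f t z) (sds f s z) s := by
  exact (hasDerivAt_fst2 f (hf.differentiable (by simp)) s z).differentiableAt.hasDerivAt

theorem hasDerivAt_pdzV {f : ℝ → ℝ → Fin 3 → ℝ} (hf : ContDiff ℝ (⊤ : ℕ∞) (unc f)) (s z : ℝ) :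
    HasDerivAt (fun t => f s t) (pdz f s z) z := by
  exact (hasDerivAt_snd2 f (hf.differentiable (by simp)) s z).differentiableAt.hasDerivAt

theorem pds_pdz_comm (f : ℝ → ℝ → Fin 3 → ℝ) (hf : ContDiff ℝ (⊤ : ℕ∞) (unc f)) (s z : ℝ) :
    pds (pdz f) s z = pdz (pds f) s z := deriv_swap2 f hf s z

theorem sds_sdz_comm (f : ℝ → ℝ → ℝ) (hf : ContDiff ℝ (⊤ : ℕ∞) (unc f)) (s z : ℝ) :
    sds (sdz f) s z = sdz (sds f) s z := deriv_swap2 f hf s z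

theorem hasDerivAt_dot3_sdz {V : ℝ → ℝ → Fin 3 → ℝ} (hV : ContDiff ℝ (⊤ : ℕ∞) (unc V))
    (W : Fin 3 → ℝ) (s z : ℝ) :
    HasDerivAt (fun t => dot3 (V s t) W) (dot3 (pdz V s z) W) z := by
  have hc := hasDerivAt_pi.mp (hasDerivAt_pdzV hV s z)
  unfold dot3
  exact (((hc 0).mul_const (W 0)).add ((hc 1).mul_const (W 1))).add ((hc 2).mul_const (W 2))

theorem hD_epsSS (hu : ContDiff ℝ (⊤ : ℕ∞) (unc u)) (s z : ℝ) :
    HasDerivAt (fun t => epsSS x₁ x₂ u s t) (epsSS x₁ x₂ (pdz u) s z) z := by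
  have h := hasDerivAt_dot3_sdz (contDiff_pdsu hu) (tau x₁ x₂ s) s z
  have e : epsSS x₁ x₂ (pdz u) s z = dot3 (pdz (pds u) s z) (tau x₁ x₂ s) := by
    unfold epsSS; rw [pds_pdz_comm u hu]
  rw [e]; exact h

theorem hD_epsZZ (hu : ContDiff ℝ (⊤ : ℕ∞) (unc u)) (s z : ℝ) :
    HasDerivAt (fun t => epsZZ u s t) (epsZZ (pdz u) s z) z :=
  hasDerivAt_dot3_sdz (contDiff_pdzu hu) e3 s z

theorem hD_epsSZ (hu : ContDiff ℝ (⊤ : ℕ∞) (unc u)) (s z : ℝ) :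
    HasDerivAt (fun t => epsSZ x₁ x₂ u s t) (epsSZ x₁ x₂ (pdz u) s z) z := by
  have h1 := hasDerivAt_dot3_sdz (contDiff_pdzu hu) (tau x₁ x₂ s) s z
  have h2 := hasDerivAt_dot3_sdz (contDiff_pdsu hu) e3 s z
  have e : epsSZ x₁ x₂ (pdz u) s z
      = (1/2) * (dot3 (pdz (pdz u) s z) (tau x₁ x₂ s) + dot3 (pdz (pds u) s z) e3) := by
    unfold epsSZ; rw [pds_pdz_comm u hu]
  rw [e]; exact (h1.add h2).const_mul (1/2)

theorem hD_rhoSS (hu : ContDiff ℝ (⊤ : ℕ∞) (unc u)) (s z : ℝ) :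
    HasDerivAt (fun t => rhoSS x₁ x₂ u s t) (rhoSS x₁ x₂ (pdz u) s z) z := by
  have h := hasDerivAt_dot3_sdz (contDiff_pdsu (contDiff_pdsu hu)) (nrm x₁ x₂ s) s z
  have hfe : pds (pdz u) = pdz (pds u) :=
    funext fun a => funext fun b => pds_pdz_comm u hu a b
  have e : rhoSS x₁ x₂ (pdz u) s z = dot3 (pdz (pds (pds u)) s z) (nrm x₁ x₂ s) := by
    unfold rhoSS; rw [hfe, pds_pdz_comm (pds u) (contDiff_pdsu hu)]
  rw [e]; exact h

theorem hD_rhoSZ (hu : ContDiff ℝ (⊤ : ℕ∞) (unc u)) (s z : ℝ) :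
    HasDerivAt (fun t => rhoSZ x₁ x₂ u s t) (rhoSZ x₁ x₂ (pdz u) s z) z := by
  have h := hasDerivAt_dot3_sdz (contDiff_pdsu (contDiff_pdzu hu)) (nrm x₁ x₂ s) s z
  have e : rhoSZ x₁ x₂ (pdz u) s z = dot3 (pdz (pds (pdz u)) s z) (nrm x₁ x₂ s) := by
    unfold rhoSZ; rw [pds_pdz_comm (pdz u) (contDiff_pdzu hu)]
  rw [e]; exact h

theorem hD_rhoZZ (hu : ContDiff ℝ (⊤ : ℕ∞) (unc u)) (s z : ℝ) :
    HasDerivAt (fun t => rhoZZ x₁ x₂ u s t) (rhoZZ x₁ x₂ (pdz u) s z) z :=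
  hasDerivAt_dot3_sdz (contDiff_pdzu (contDiff_pdzu hu)) (nrm x₁ x₂ s) s z

theorem hD_Nsz (hu : ContDiff ℝ (⊤ : ℕ∞) (unc u)) (s z : ℝ) :
    HasDerivAt (fun t => Nsz C ν x₁ x₂ u s t) (Nsz C ν x₁ x₂ (pdz u) s z) z := by
  unfold Nsz
  exact (hD_epsSZ hu s z).const_mul (C * (1 - ν))

theorem hD_Nzz (hu : ContDiff ℝ (⊤ : ℕ∞) (unc u)) (s z : ℝ) :
    HasDerivAt (fun t => Nzz C ν x₁ x₂ u s t) (Nzz C ν x₁ x₂ (pdz u) s z) z := by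
  unfold Nzz
  exact (((hD_epsSS hu s z).const_mul ν).add (hD_epsZZ hu s z)).const_mul C

theorem hD_Msz (hu : ContDiff ℝ (⊤ : ℕ∞) (unc u)) (s z : ℝ) :
    HasDerivAt (fun t => Msz D ν x₁ x₂ u s t) (Msz D ν x₁ x₂ (pdz u) s z) z := by
  unfold Msz
  exact (hD_rhoSZ hu s z).const_mul (D * (1 - ν))

theorem hD_Mzz (hu : ContDiff ℝ (⊤ : ℕ∞) (unc u)) (s z : ℝ) :
    HasDerivAt (fun t => Mzz D ν x₁ x₂ u s t) (Mzz D ν x₁ x₂ (pdz u) s z) z := by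
  unfold Mzz
  exact (((hD_rhoSS hu s z).const_mul ν).add (hD_rhoZZ hu s z)).const_mul D

theorem hD_Psz (hu : ContDiff ℝ (⊤ : ℕ∞) (unc u)) (s z : ℝ) :
    HasDerivAt (fun t => Psz C D ν x₁ x₂ u s t) (Psz C D ν x₁ x₂ (pdz u) s z) z := by
  unfold Psz
  exact (hD_Nsz hu s z).sub ((hD_Msz hu s z).const_mul (kap x₁ x₂ s))

-- pointwise equalities: stresses of the derivative field are z-derivatives
theorem Msz_pdz (hu : ContDiff ℝ (⊤ : ℕ∞) (unc u)) (s z : ℝ) :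
    Msz D ν x₁ x₂ (pdz u) s z = sdz (Msz D ν x₁ x₂ u) s z :=
  ((hD_Msz hu s z).deriv).symm

theorem Mzz_pdz (hu : ContDiff ℝ (⊤ : ℕ∞) (unc u)) (s z : ℝ) :
    Mzz D ν x₁ x₂ (pdz u) s z = sdz (Mzz D ν x₁ x₂ u) s z :=
  ((hD_Mzz hu s z).deriv).symm

theorem Psz_pdz (hu : ContDiff ℝ (⊤ : ℕ∞) (unc u)) (s z : ℝ) :
    Psz C D ν x₁ x₂ (pdz u) s z = sdz (Psz C D ν x₁ x₂ u) s z :=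
  ((hD_Psz hu s z).deriv).symm

theorem Pzz_pdz (hu : ContDiff ℝ (⊤ : ℕ∞) (unc u)) (s z : ℝ) :
    Pzz C ν x₁ x₂ (pdz u) s z = sdz (Pzz C ν x₁ x₂ u) s z :=
  ((hD_Nzz hu s z).deriv).symm

theorem Szf_pdz (hx₁ : ContDiff ℝ (⊤ : ℕ∞) x₁) (hx₂ : ContDiff ℝ (⊤ : ℕ∞) x₂)
    (hu : ContDiff ℝ (⊤ : ℕ∞) (unc u)) (s z : ℝ) :
    Szf D ν x₁ x₂ (pdz u) s z = sdz (Szf D ν x₁ x₂ u) s z := by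
  have hMsz := contDiff_Msz (D := D) (ν := ν) hx₁ hx₂ hu
  have hMzz := contDiff_Mzz (D := D) (ν := ν) hx₁ hx₂ hu
  have hMszfe : Msz D ν x₁ x₂ (pdz u) = sdz (Msz D ν x₁ x₂ u) :=
    funext fun a => funext fun b => Msz_pdz hu a b
  have hMzzfe : Mzz D ν x₁ x₂ (pdz u) = sdz (Mzz D ν x₁ x₂ u) :=
    funext fun a => funext fun b => Mzz_pdz hu a b
  have lhs_eq : Szf D ν x₁ x₂ (pdz u) s z
      = -sdz (sds (Msz D ν x₁ x₂ u)) s z - sdz (sdz (Mzz D ν x₁ x₂ u)) s z := by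
    unfold Szf
    rw [hMszfe, hMzzfe, sds_sdz_comm _ hMsz]
  have h1 := hasDerivAt_sdz (contDiff_sdsu hMsz) s z
  have h2 := hasDerivAt_sdz (contDiff_sdzu hMzz) s z
  have rhs_eq : sdz (Szf D ν x₁ x₂ u) s z
      = -sdz (sds (Msz D ν x₁ x₂ u)) s z - sdz (sdz (Mzz D ν x₁ x₂ u)) s z :=
    (h1.neg.sub h2).deriv
  rw [lhs_eq, rhs_eq]

-- rearrangements of the definitions of Ssf, Szf
theorem sdz_Msz_eq (hx₁ : ContDiff ℝ (⊤ : ℕ∞) x₁) (hx₂ : ContDiff ℝ (⊤ : ℕ∞) x₂)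
    (hu : ContDiff ℝ (⊤ : ℕ∞) (unc u)) (s z : ℝ) :
    sdz (Msz D ν x₁ x₂ u) s z
      = -Ssf D ν x₁ x₂ u s z - sds (Mss D ν x₁ x₂ u) s z := by
  unfold Ssf; ring

theorem sdz_Mzz_eq (hx₁ : ContDiff ℝ (⊤ : ℕ∞) x₁) (hx₂ : ContDiff ℝ (⊤ : ℕ∞) x₂)
    (hu : ContDiff ℝ (⊤ : ℕ∞) (unc u)) (s z : ℝ) :
    sdz (Mzz D ν x₁ x₂ u) s z
      = -Szf D ν x₁ x₂ u s z - sds (Msz D ν x₁ x₂ u) s z := by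
  unfold Szf; ring

end DerivId

section FrenetPeriodic

variable {x₁ x₂ : ℝ → ℝ} {u : ℝ → ℝ → Fin 3 → ℝ} {C D ν sbar : ℝ}

theorem frenet₁ (hx₁ : ContDiff ℝ (⊤ : ℕ∞) x₁) (hx₂ : ContDiff ℝ (⊤ : ℕ∞) x₂)
    (harc : ∀ s, deriv x₁ s ^ 2 + deriv x₂ s ^ 2 = 1) (s : ℝ) :
    deriv (deriv x₁) s = -(kap x₁ x₂ s) * deriv x₂ s := by
  have h1 : HasDerivAt (deriv x₁) (deriv (deriv x₁) s) s :=
    ((hx₁.deriv_top.differentiable (by simp)) s).hasDerivAt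
  have h2 : HasDerivAt (deriv x₂) (deriv (deriv x₂) s) s :=
    ((hx₂.deriv_top.differentiable (by simp)) s).hasDerivAt
  have hsum : HasDerivAt (fun t => deriv x₁ t ^ 2 + deriv x₂ t ^ 2)
      ((2 : ℕ) * deriv x₁ s ^ 1 * deriv (deriv x₁) s
        + (2 : ℕ) * deriv x₂ s ^ 1 * deriv (deriv x₂) s) s :=
    (h1.pow 2).add (h2.pow 2)
  have hconst : (fun t => deriv x₁ t ^ 2 + deriv x₂ t ^ 2) = fun _ => (1 : ℝ) :=
    funext fun t => harc t
  have hzero : (2 : ℕ) * deriv x₁ s ^ 1 * deriv (deriv x₁) s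
      + (2 : ℕ) * deriv x₂ s ^ 1 * deriv (deriv x₂) s = 0 := by
    have := hsum.unique (hconst ▸ hasDerivAt_const s (1:ℝ))
    simpa using this
  have h0 : deriv x₁ s * deriv (deriv x₁) s + deriv x₂ s * deriv (deriv x₂) s = 0 := by
    push_cast at hzero; nlinarith [hzero]
  have : deriv (deriv x₁) s = deriv (deriv x₁) s * (deriv x₁ s ^ 2 + deriv x₂ s ^ 2) := by
    rw [harc s]; ring
  rw [this]
  unfold kap
  linear_combination (deriv x₁ s) * h0

theorem frenet₂ (hx₁ : ContDiff ℝ (⊤ : ℕ∞) x₁) (hx₂ : ContDiff ℝ (⊤ : ℕ∞) x₂)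
    (harc : ∀ s, deriv x₁ s ^ 2 + deriv x₂ s ^ 2 = 1) (s : ℝ) :
    deriv (deriv x₂) s = kap x₁ x₂ s * deriv x₁ s := by
  have h1 : HasDerivAt (deriv x₁) (deriv (deriv x₁) s) s :=
    ((hx₁.deriv_top.differentiable (by simp)) s).hasDerivAt
  have h2 : HasDerivAt (deriv x₂) (deriv (deriv x₂) s) s :=
    ((hx₂.deriv_top.differentiable (by simp)) s).hasDerivAt
  have hsum : HasDerivAt (fun t => deriv x₁ t ^ 2 + deriv x₂ t ^ 2)
      ((2 : ℕ) * deriv x₁ s ^ 1 * deriv (deriv x₁) s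
        + (2 : ℕ) * deriv x₂ s ^ 1 * deriv (deriv x₂) s) s :=
    (h1.pow 2).add (h2.pow 2)
  have hconst : (fun t => deriv x₁ t ^ 2 + deriv x₂ t ^ 2) = fun _ => (1 : ℝ) :=
    funext fun t => harc t
  have hzero : (2 : ℕ) * deriv x₁ s ^ 1 * deriv (deriv x₁) s
      + (2 : ℕ) * deriv x₂ s ^ 1 * deriv (deriv x₂) s = 0 := by
    have := hsum.unique (hconst ▸ hasDerivAt_const s (1:ℝ))
    simpa using this
  have h0 : deriv x₁ s * deriv (deriv x₁) s + deriv x₂ s * deriv (deriv x₂) s = 0 := by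
    push_cast at hzero; nlinarith [hzero]
  have : deriv (deriv x₂) s = deriv (deriv x₂) s * (deriv x₁ s ^ 2 + deriv x₂ s ^ 2) := by
    rw [harc s]; ring
  rw [this]
  unfold kap
  linear_combination (deriv x₂ s) * h0

/-- derivative of a periodic function is periodic -/
theorem deriv_per {E : Type*} [NormedAddCommGroup E] [NormedSpace ℝ E]
    {f : ℝ → E} {c : ℝ} (hf : ∀ s, f (s + c) = f s) (s : ℝ) :
    deriv f (s + c) = deriv f s := by
  have h1 : (fun t => f (t + c)) = f := funext hf
  rw [← deriv_comp_add_const f c s, h1]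

theorem per_pds {E : Type*} [NormedAddCommGroup E] [NormedSpace ℝ E]
    {f : ℝ → ℝ → E} {c : ℝ} (hf : ∀ s z, f (s + c) z = f s z) (s z : ℝ) :
    deriv (fun t => f t z) (s + c) = deriv (fun t => f t z) s :=
  deriv_per (f := fun t => f t z) (fun t => hf t z) s

theorem per_pdz {E : Type*} [NormedAddCommGroup E] [NormedSpace ℝ E]
    {f : ℝ → ℝ → E} {c : ℝ} (hf : ∀ s z, f (s + c) z = f s z) (s z : ℝ) :
    deriv (fun t => f (s + c) t) z = deriv (fun t => f s t) z := by
  have : (fun t => f (s + c) t) = fun t => f s t := funext fun t => hf s t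
  rw [this]

theorem per_tau (hper₁ : ∀ s, x₁ (s + sbar) = x₁ s) (hper₂ : ∀ s, x₂ (s + sbar) = x₂ s)
    (s : ℝ) : tau x₁ x₂ (s + sbar) = tau x₁ x₂ s := by
  unfold tau; rw [deriv_per hper₁, deriv_per hper₂]

theorem per_nrm (hper₁ : ∀ s, x₁ (s + sbar) = x₁ s) (hper₂ : ∀ s, x₂ (s + sbar) = x₂ s)
    (s : ℝ) : nrm x₁ x₂ (s + sbar) = nrm x₁ x₂ s := by
  unfold nrm; rw [deriv_per hper₁, deriv_per hper₂]

theorem per_kap (hper₁ : ∀ s, x₁ (s + sbar) = x₁ s) (hper₂ : ∀ s, x₂ (s + sbar) = x₂ s)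
    (s : ℝ) : kap x₁ x₂ (s + sbar) = kap x₁ x₂ s := by
  unfold kap
  rw [deriv_per hper₁, deriv_per hper₂, deriv_per (deriv_per hper₁),
    deriv_per (deriv_per hper₂)]

section PerFields
variable (hper₁ : ∀ s, x₁ (s + sbar) = x₁ s) (hper₂ : ∀ s, x₂ (s + sbar) = x₂ s)
  (huper : ∀ s z, u (s + sbar) z = u s z)
include hper₁ hper₂ huper

theorem per_epsSS : ∀ s z, epsSS x₁ x₂ u (s + sbar) z = epsSS x₁ x₂ u s z := by
  intro s z
  unfold epsSS
  rw [show pds u (s + sbar) z = pds u s z from per_pds huper s z, per_tau hper₁ hper₂]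

theorem per_epsZZ : ∀ s z, epsZZ u (s + sbar) z = epsZZ u s z := by
  intro s z
  unfold epsZZ
  rw [show pdz u (s + sbar) z = pdz u s z from per_pdz huper s z]

theorem per_epsSZ : ∀ s z, epsSZ x₁ x₂ u (s + sbar) z = epsSZ x₁ x₂ u s z := by
  intro s z
  unfold epsSZ
  rw [show pdz u (s + sbar) z = pdz u s z from per_pdz huper s z,
    show pds u (s + sbar) z = pds u s z from per_pds huper s z, per_tau hper₁ hper₂]

theorem per_pds_pds : ∀ s z, pds (pds u) (s + sbar) z = pds (pds u) s z :=
  fun s z => per_pds (fun a b => per_pds huper a b) s z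

theorem per_pds_pdz : ∀ s z, pds (pdz u) (s + sbar) z = pds (pdz u) s z :=
  fun s z => per_pds (fun a b => per_pdz huper a b) s z

theorem per_pdz_pdz : ∀ s z, pdz (pdz u) (s + sbar) z = pdz (pdz u) s z :=
  fun s z => per_pdz (fun a b => per_pdz huper a b) s z

theorem per_rhoSS : ∀ s z, rhoSS x₁ x₂ u (s + sbar) z = rhoSS x₁ x₂ u s z := by
  intro s z
  unfold rhoSS
  rw [per_pds_pds hper₁ hper₂ huper, per_nrm hper₁ hper₂]

theorem per_rhoSZ : ∀ s z, rhoSZ x₁ x₂ u (s + sbar) z = rhoSZ x₁ x₂ u s z := by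
  intro s z
  unfold rhoSZ
  rw [per_pds_pdz hper₁ hper₂ huper, per_nrm hper₁ hper₂]

theorem per_rhoZZ : ∀ s z, rhoZZ x₁ x₂ u (s + sbar) z = rhoZZ x₁ x₂ u s z := by
  intro s z
  unfold rhoZZ
  rw [per_pdz_pdz hper₁ hper₂ huper, per_nrm hper₁ hper₂]

theorem per_Nsz : ∀ s z, Nsz C ν x₁ x₂ u (s + sbar) z = Nsz C ν x₁ x₂ u s z := by
  intro s z; unfold Nsz; rw [per_epsSZ hper₁ hper₂ huper]

theorem per_Nss : ∀ s z, Nss C ν x₁ x₂ u (s + sbar) z = Nss C ν x₁ x₂ u s z := by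
  intro s z; unfold Nss; rw [per_epsSS hper₁ hper₂ huper, per_epsZZ hper₁ hper₂ huper]

theorem per_Mss : ∀ s z, Mss D ν x₁ x₂ u (s + sbar) z = Mss D ν x₁ x₂ u s z := by
  intro s z; unfold Mss; rw [per_rhoSS hper₁ hper₂ huper, per_rhoZZ hper₁ hper₂ huper]

theorem per_Msz : ∀ s z, Msz D ν x₁ x₂ u (s + sbar) z = Msz D ν x₁ x₂ u s z := by
  intro s z; unfold Msz; rw [per_rhoSZ hper₁ hper₂ huper]

theorem per_Pss : ∀ s z, Pss C D ν x₁ x₂ u (s + sbar) z = Pss C D ν x₁ x₂ u s z := by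
  intro s z; unfold Pss
  rw [per_Nss hper₁ hper₂ huper, per_Mss hper₁ hper₂ huper, per_kap hper₁ hper₂]

theorem per_Ssf : ∀ s z, Ssf D ν x₁ x₂ u (s + sbar) z = Ssf D ν x₁ x₂ u s z := by
  intro s z; unfold Ssf
  rw [show sds (Mss D ν x₁ x₂ u) (s + sbar) z = sds (Mss D ν x₁ x₂ u) s z from
      per_pds (per_Mss hper₁ hper₂ huper) s z,
    show sdz (Msz D ν x₁ x₂ u) (s + sbar) z = sdz (Msz D ν x₁ x₂ u) s z from
      per_pdz (per_Msz hper₁ hper₂ huper) s z]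

end PerFields
end FrenetPeriodic

/-- First component of the potential G. -/
def G₀ (C D ν : ℝ) (x₁ x₂ : ℝ → ℝ) (u : ℝ → ℝ → Fin 3 → ℝ) : ℝ → ℝ := fun s =>
  -(x₂ s * Nsz C ν x₁ x₂ u s 0) - Msz D ν x₁ x₂ u s 0 * deriv x₁ s

/-- Second component of the potential G. -/
def G₁ (C D ν : ℝ) (x₁ x₂ : ℝ → ℝ) (u : ℝ → ℝ → Fin 3 → ℝ) : ℝ → ℝ := fun s =>
  x₁ s * Nsz C ν x₁ x₂ u s 0 - Msz D ν x₁ x₂ u s 0 * deriv x₂ s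

/-- Third component of the potential G. -/
def G₂ (C D ν : ℝ) (x₁ x₂ : ℝ → ℝ) (u : ℝ → ℝ → Fin 3 → ℝ) : ℝ → ℝ := fun s =>
  -(x₁ s * (Pss C D ν x₁ x₂ u s 0 * deriv x₂ s - Ssf D ν x₁ x₂ u s 0 * deriv x₁ s))
    + x₂ s * (Pss C D ν x₁ x₂ u s 0 * deriv x₁ s + Ssf D ν x₁ x₂ u s 0 * deriv x₂ s)
    + Mss D ν x₁ x₂ u s 0

section Main
variable {C D ν sbar : ℝ} {x₁ x₂ : ℝ → ℝ} {u : ℝ → ℝ → Fin 3 → ℝ}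

theorem contDiff_slice {f : ℝ → ℝ → ℝ} (hf : ContDiff ℝ (⊤ : ℕ∞) (unc f)) :
    ContDiff ℝ (⊤ : ℕ∞) (fun s => f s 0) := hf.comp (contDiff_id.prodMk contDiff_const)

section CD
variable (hx₁ : ContDiff ℝ (⊤ : ℕ∞) x₁) (hx₂ : ContDiff ℝ (⊤ : ℕ∞) x₂) (hu : ContDiff ℝ (⊤ : ℕ∞) (unc u))
include hx₁ hx₂ hu

theorem contDiff_G₀ : ContDiff ℝ (⊤ : ℕ∞) (G₀ C D ν x₁ x₂ u) :=
  ((hx₂.mul (contDiff_slice (contDiff_Nsz hx₁ hx₂ hu))).neg).sub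
    ((contDiff_slice (contDiff_Msz hx₁ hx₂ hu)).mul hx₁.deriv_top)

theorem contDiff_G₁ : ContDiff ℝ (⊤ : ℕ∞) (G₁ C D ν x₁ x₂ u) :=
  (hx₁.mul (contDiff_slice (contDiff_Nsz hx₁ hx₂ hu))).sub
    ((contDiff_slice (contDiff_Msz hx₁ hx₂ hu)).mul hx₂.deriv_top)

theorem contDiff_G₂ : ContDiff ℝ (⊤ : ℕ∞) (G₂ C D ν x₁ x₂ u) :=
  (((hx₁.mul (((contDiff_slice (contDiff_Pss hx₁ hx₂ hu)).mul hx₂.deriv_top).sub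
      ((contDiff_slice (contDiff_Ssf hx₁ hx₂ hu)).mul hx₁.deriv_top))).neg).add
    (hx₂.mul (((contDiff_slice (contDiff_Pss hx₁ hx₂ hu)).mul hx₁.deriv_top).add
      ((contDiff_slice (contDiff_Ssf hx₁ hx₂ hu)).mul hx₂.deriv_top)))).add
    (contDiff_slice (contDiff_Mss hx₁ hx₂ hu))

end CD

theorem per_G (hper₁ : ∀ s, x₁ (s + sbar) = x₁ s) (hper₂ : ∀ s, x₂ (s + sbar) = x₂ s)
    (huper : ∀ s z, u (s + sbar) z = u s z) (s : ℝ) :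
    G₀ C D ν x₁ x₂ u (s + sbar) = G₀ C D ν x₁ x₂ u s
    ∧ G₁ C D ν x₁ x₂ u (s + sbar) = G₁ C D ν x₁ x₂ u s
    ∧ G₂ C D ν x₁ x₂ u (s + sbar) = G₂ C D ν x₁ x₂ u s := by
  unfold G₀ G₁ G₂
  rw [hper₁, hper₂, deriv_per hper₁, deriv_per hper₂,
    per_Nsz hper₁ hper₂ huper, per_Msz hper₁ hper₂ huper,
    per_Pss hper₁ hper₂ huper, per_Ssf hper₁ hper₂ huper, per_Mss hper₁ hper₂ huper]
  exact ⟨rfl, rfl, rfl⟩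

/-- The key pointwise identity: the ℳ(∂u/∂z)-integrand equals the rotated
ℛ(u)-integrand plus an exact derivative. -/
theorem key_identity (hx₁ : ContDiff ℝ (⊤ : ℕ∞) x₁) (hx₂ : ContDiff ℝ (⊤ : ℕ∞) x₂)
    (harc : ∀ s, deriv x₁ s ^ 2 + deriv x₂ s ^ 2 = 1)
    (hu : ContDiff ℝ (⊤ : ℕ∞) (unc u))
    (heq : ∀ s z : ℝ, Equilib C D ν x₁ x₂ u s z) (s : ℝ) :
    (cross3 (pos x₁ x₂ s 0)
        (Psz C D ν x₁ x₂ (pdz u) s 0 • tau x₁ x₂ s + Pzz C ν x₁ x₂ (pdz u) s 0 • e3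
          + Szf D ν x₁ x₂ (pdz u) s 0 • nrm x₁ x₂ s)
      - Msz D ν x₁ x₂ (pdz u) s 0 • e3 + Mzz D ν x₁ x₂ (pdz u) s 0 • tau x₁ x₂ s)
    = ![ (Psz C D ν x₁ x₂ u s 0 * deriv x₂ s - Szf D ν x₁ x₂ u s 0 * deriv x₁ s)
          + deriv (G₀ C D ν x₁ x₂ u) s,
        (-(Psz C D ν x₁ x₂ u s 0 * deriv x₁ s) - Szf D ν x₁ x₂ u s 0 * deriv x₂ s)
          + deriv (G₁ C D ν x₁ x₂ u) s,
        deriv (G₂ C D ν x₁ x₂ u) s ] := by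
  obtain ⟨E1, E2, E3⟩ := heq s 0
  -- HasDerivAt facts for the one-variable slice functions
  have hx1 : HasDerivAt x₁ (deriv x₁ s) s := ((hx₁.differentiable (by simp)) s).hasDerivAt
  have hx2 : HasDerivAt x₂ (deriv x₂ s) s := ((hx₂.differentiable (by simp)) s).hasDerivAt
  have hdx1 : HasDerivAt (deriv x₁) (-(kap x₁ x₂ s) * deriv x₂ s) s := by
    have h := ((hx₁.deriv_top.differentiable (by simp)) s).hasDerivAt
    rwa [frenet₁ hx₁ hx₂ harc s] at h
  have hdx2 : HasDerivAt (deriv x₂) (kap x₁ x₂ s * deriv x₁ s) s := by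
    have h := ((hx₂.deriv_top.differentiable (by simp)) s).hasDerivAt
    rwa [frenet₂ hx₁ hx₂ harc s] at h
  have hnsz : HasDerivAt (fun t => Nsz C ν x₁ x₂ u t 0) (sds (Nsz C ν x₁ x₂ u) s 0) s :=
    hasDerivAt_sds (contDiff_Nsz hx₁ hx₂ hu) s 0
  have hmsz : HasDerivAt (fun t => Msz D ν x₁ x₂ u t 0) (sds (Msz D ν x₁ x₂ u) s 0) s :=
    hasDerivAt_sds (contDiff_Msz hx₁ hx₂ hu) s 0
  have hmss : HasDerivAt (fun t => Mss D ν x₁ x₂ u t 0) (sds (Mss D ν x₁ x₂ u) s 0) s :=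
    hasDerivAt_sds (contDiff_Mss hx₁ hx₂ hu) s 0
  have hpss : HasDerivAt (fun t => Pss C D ν x₁ x₂ u t 0) (sds (Pss C D ν x₁ x₂ u) s 0) s :=
    hasDerivAt_sds (contDiff_Pss hx₁ hx₂ hu) s 0
  have hssf : HasDerivAt (fun t => Ssf D ν x₁ x₂ u t 0) (sds (Ssf D ν x₁ x₂ u) s 0) s :=
    hasDerivAt_sds (contDiff_Ssf hx₁ hx₂ hu) s 0
  -- derivatives of the potentials
  have hG0 : deriv (G₀ C D ν x₁ x₂ u) s
      = -(deriv x₂ s * Nsz C ν x₁ x₂ u s 0 + x₂ s * sds (Nsz C ν x₁ x₂ u) s 0)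
        - (sds (Msz D ν x₁ x₂ u) s 0 * deriv x₁ s
            + Msz D ν x₁ x₂ u s 0 * (-(kap x₁ x₂ s) * deriv x₂ s)) :=
    (((hx2.mul hnsz).neg).sub (hmsz.mul hdx1)).deriv
  have hG1 : deriv (G₁ C D ν x₁ x₂ u) s
      = deriv x₁ s * Nsz C ν x₁ x₂ u s 0 + x₁ s * sds (Nsz C ν x₁ x₂ u) s 0
        - (sds (Msz D ν x₁ x₂ u) s 0 * deriv x₂ s
            + Msz D ν x₁ x₂ u s 0 * (kap x₁ x₂ s * deriv x₁ s)) :=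
    ((hx1.mul hnsz).sub (hmsz.mul hdx2)).deriv
  have hG2 : deriv (G₂ C D ν x₁ x₂ u) s
      = -(deriv x₁ s * (Pss C D ν x₁ x₂ u s 0 * deriv x₂ s
              - Ssf D ν x₁ x₂ u s 0 * deriv x₁ s)
          + x₁ s * (sds (Pss C D ν x₁ x₂ u) s 0 * deriv x₂ s
              + Pss C D ν x₁ x₂ u s 0 * (kap x₁ x₂ s * deriv x₁ s)
              - (sds (Ssf D ν x₁ x₂ u) s 0 * deriv x₁ s
                  + Ssf D ν x₁ x₂ u s 0 * (-(kap x₁ x₂ s) * deriv x₂ s))))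
        + (deriv x₂ s * (Pss C D ν x₁ x₂ u s 0 * deriv x₁ s
              + Ssf D ν x₁ x₂ u s 0 * deriv x₂ s)
          + x₂ s * (sds (Pss C D ν x₁ x₂ u) s 0 * deriv x₁ s
              + Pss C D ν x₁ x₂ u s 0 * (-(kap x₁ x₂ s) * deriv x₂ s)
              + (sds (Ssf D ν x₁ x₂ u) s 0 * deriv x₂ s
                  + Ssf D ν x₁ x₂ u s 0 * (kap x₁ x₂ s * deriv x₁ s))))
        + sds (Mss D ν x₁ x₂ u) s 0 :=
    ((((hx1.mul ((hpss.mul hdx2).sub (hssf.mul hdx1))).neg).add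
      (hx2.mul ((hpss.mul hdx1).add (hssf.mul hdx2)))).add hmss).deriv
  -- stresses of the derivative field are z-derivatives
  rw [Psz_pdz hu, Pzz_pdz hu, Szf_pdz hx₁ hx₂ hu, Msz_pdz hu, Mzz_pdz hu]
  -- equilibrium substitutions
  have hPsz : sdz (Psz C D ν x₁ x₂ u) s 0
      = -(sds (Pss C D ν x₁ x₂ u) s 0) - kap x₁ x₂ s * Ssf D ν x₁ x₂ u s 0 := by
    linarith [E1]
  have hPzz : sdz (Pzz C ν x₁ x₂ u) s 0 = -(sds (Nsz C ν x₁ x₂ u) s 0) := by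
    have h := E2; unfold Pzs at h; linarith [h]
  have hSzf : sdz (Szf D ν x₁ x₂ u) s 0
      = -(sds (Ssf D ν x₁ x₂ u) s 0) + kap x₁ x₂ s * Pss C D ν x₁ x₂ u s 0 := by
    linarith [E3]
  have hMsz : sdz (Msz D ν x₁ x₂ u) s 0
      = -Ssf D ν x₁ x₂ u s 0 - sds (Mss D ν x₁ x₂ u) s 0 :=
    sdz_Msz_eq hx₁ hx₂ hu s 0
  have hMzz : sdz (Mzz D ν x₁ x₂ u) s 0
      = -Szf D ν x₁ x₂ u s 0 - sds (Msz D ν x₁ x₂ u) s 0 :=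
    sdz_Mzz_eq hx₁ hx₂ hu s 0
  rw [hPsz, hPzz, hSzf, hMsz, hMzz, hG0, hG1, hG2]
  have hPszdef : Psz C D ν x₁ x₂ u s 0
      = Nsz C ν x₁ x₂ u s 0 - kap x₁ x₂ s * Msz D ν x₁ x₂ u s 0 := rfl
  rw [hPszdef]
  funext i
  fin_cases i
  · simp [cross3, pos, tau, nrm, e3]; ring
  · simp [cross3, pos, tau, nrm, e3]; ring
  · simp [cross3, pos, tau, nrm, e3]
    linear_combination (-(Ssf D ν x₁ x₂ u s 0)) * harc s

end Main

/-- Theorem 1, moment resultant of the derivative field: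
if u is smooth, s̄-periodic in s and satisfies the equilibrium equations, then
ℳ(∂u/∂z) = (ℛ₂(u), −ℛ₁(u), 0), i.e. ℳ₃(∂u/∂z) = 0 and ℳ_α(∂u/∂z) = e_{αβ}ℛ_β(u). -/
theorem moment_resultant_of_derivative_field
    (C D ν sbar : ℝ) (hC : 0 < C) (hD : 0 < D) (hsbar : 0 < sbar)
    (x₁ x₂ : ℝ → ℝ)
    (hx₁ : ContDiff ℝ (⊤ : ℕ∞) x₁) (hx₂ : ContDiff ℝ (⊤ : ℕ∞) x₂)
    (hper₁ : ∀ s, x₁ (s + sbar) = x₁ s) (hper₂ : ∀ s, x₂ (s + sbar) = x₂ s)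
    (harc : ∀ s, deriv x₁ s ^ 2 + deriv x₂ s ^ 2 = 1)
    (u : ℝ → ℝ → Fin 3 → ℝ)
    (hu : ContDiff ℝ (⊤ : ℕ∞) (fun p : ℝ × ℝ => u p.1 p.2))
    (huper : ∀ s z, u (s + sbar) z = u s z)
    (heq : ∀ s z : ℝ, Equilib C D ν x₁ x₂ u s z) :
    Mres C D ν x₁ x₂ sbar (pdz u)
      = ![Rres C D ν x₁ x₂ sbar u 1, -Rres C D ν x₁ x₂ sbar u 0, 0] := by
  have hucc : ContDiff ℝ (⊤ : ℕ∞) (unc u) := hu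
  -- continuity facts
  have c6 : Continuous fun s => Psz C D ν x₁ x₂ u s 0 :=
    (contDiff_slice (contDiff_Psz hx₁ hx₂ hucc)).continuous
  have c7 : Continuous fun s => Szf D ν x₁ x₂ u s 0 :=
    (contDiff_slice (contDiff_Szf hx₁ hx₂ hucc)).continuous
  have c8 : Continuous fun s => Pzz C ν x₁ x₂ u s 0 :=
    (contDiff_slice (contDiff_Nzz hx₁ hx₂ hucc)).continuous
  have cdx1 : Continuous (deriv x₁) := hx₁.deriv_top.continuous
  have cdx2 : Continuous (deriv x₂) := hx₂.deriv_top.continuous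
  have cG0' : Continuous (deriv (G₀ C D ν x₁ x₂ u)) :=
    (contDiff_G₀ hx₁ hx₂ hucc).deriv_top.continuous
  have cG1' : Continuous (deriv (G₁ C D ν x₁ x₂ u)) :=
    (contDiff_G₁ hx₁ hx₂ hucc).deriv_top.continuous
  have cG2' : Continuous (deriv (G₂ C D ν x₁ x₂ u)) :=
    (contDiff_G₂ hx₁ hx₂ hucc).deriv_top.continuous
  have hdG0 : Differentiable ℝ (G₀ C D ν x₁ x₂ u) :=
    (contDiff_G₀ hx₁ hx₂ hucc).differentiable (by simp)
  have hdG1 : Differentiable ℝ (G₁ C D ν x₁ x₂ u) :=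
    (contDiff_G₁ hx₁ hx₂ hucc).differentiable (by simp)
  have hdG2 : Differentiable ℝ (G₂ C D ν x₁ x₂ u) :=
    (contDiff_G₂ hx₁ hx₂ hucc).differentiable (by simp)
  have cK0 : Continuous (fun s => Psz C D ν x₁ x₂ u s 0 * deriv x₂ s - Szf D ν x₁ x₂ u s 0 * deriv x₁ s) := (c6.mul cdx2).sub (c7.mul cdx1)
  have cK1 : Continuous (fun s => -(Psz C D ν x₁ x₂ u s 0 * deriv x₁ s) - Szf D ν x₁ x₂ u s 0 * deriv x₂ s) := ((c6.mul cdx1).neg).sub (c7.mul cdx2)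
  -- boundary values
  have hb0 : G₀ C D ν x₁ x₂ u sbar = G₀ C D ν x₁ x₂ u 0 := by
    have h := (per_G (C := C) (D := D) (ν := ν) hper₁ hper₂ huper 0).1
    rwa [zero_add] at h
  have hb1 : G₁ C D ν x₁ x₂ u sbar = G₁ C D ν x₁ x₂ u 0 := by
    have h := (per_G (C := C) (D := D) (ν := ν) hper₁ hper₂ huper 0).2.1
    rwa [zero_add] at h
  have hb2 : G₂ C D ν x₁ x₂ u sbar = G₂ C D ν x₁ x₂ u 0 := by
    have h := (per_G (C := C) (D := D) (ν := ν) hper₁ hper₂ huper 0).2.2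
    rwa [zero_add] at h
  -- integrals of the exact derivatives vanish
  have e0 : ∫ s in (0:ℝ)..sbar, deriv (G₀ C D ν x₁ x₂ u) s = 0 := by
    rw [intervalIntegral.integral_deriv_eq_sub (fun x _ => hdG0 x)
      (cG0'.intervalIntegrable 0 sbar), hb0, sub_self]
  have e1 : ∫ s in (0:ℝ)..sbar, deriv (G₁ C D ν x₁ x₂ u) s = 0 := by
    rw [intervalIntegral.integral_deriv_eq_sub (fun x _ => hdG1 x)
      (cG1'.intervalIntegrable 0 sbar), hb1, sub_self]
  have e2 : ∫ s in (0:ℝ)..sbar, deriv (G₂ C D ν x₁ x₂ u) s = 0 := by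
    rw [intervalIntegral.integral_deriv_eq_sub (fun x _ => hdG2 x)
      (cG2'.intervalIntegrable 0 sbar), hb2, sub_self]
  -- split integrals
  have i0 : ∫ s in (0:ℝ)..sbar, ((fun s => Psz C D ν x₁ x₂ u s 0 * deriv x₂ s - Szf D ν x₁ x₂ u s 0 * deriv x₁ s) s + deriv (G₀ C D ν x₁ x₂ u) s)
      = ∫ s in (0:ℝ)..sbar, (fun s => Psz C D ν x₁ x₂ u s 0 * deriv x₂ s - Szf D ν x₁ x₂ u s 0 * deriv x₁ s) s := by
    rw [intervalIntegral.integral_add (cK0.intervalIntegrable 0 sbar)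
      (cG0'.intervalIntegrable 0 sbar), e0, add_zero]
  have i1 : ∫ s in (0:ℝ)..sbar, ((fun s => -(Psz C D ν x₁ x₂ u s 0 * deriv x₁ s) - Szf D ν x₁ x₂ u s 0 * deriv x₂ s) s + deriv (G₁ C D ν x₁ x₂ u) s)
      = ∫ s in (0:ℝ)..sbar, (fun s => -(Psz C D ν x₁ x₂ u s 0 * deriv x₁ s) - Szf D ν x₁ x₂ u s 0 * deriv x₂ s) s := by
    rw [intervalIntegral.integral_add (cK1.intervalIntegrable 0 sbar)
      (cG1'.intervalIntegrable 0 sbar), e1, add_zero]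
  -- rewrite Mres via the key identity
  have hIJ : Mres C D ν x₁ x₂ sbar (pdz u) = -∫ s in (0:ℝ)..sbar, (fun s => (![ (fun s => Psz C D ν x₁ x₂ u s 0 * deriv x₂ s - Szf D ν x₁ x₂ u s 0 * deriv x₁ s) s + deriv (G₀ C D ν x₁ x₂ u) s,
        (fun s => -(Psz C D ν x₁ x₂ u s 0 * deriv x₁ s) - Szf D ν x₁ x₂ u s 0 * deriv x₂ s) s + deriv (G₁ C D ν x₁ x₂ u) s,
        deriv (G₂ C D ν x₁ x₂ u) s ] : Fin 3 → ℝ)) s := by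
    unfold Mres
    congr 1
    exact intervalIntegral.integral_congr fun s _ => key_identity hx₁ hx₂ harc hucc heq s
  -- projection of vector interval integrals
  have hproj : ∀ (g : ℝ → Fin 3 → ℝ), Continuous g → ∀ i : Fin 3,
      (∫ s in (0:ℝ)..sbar, g s) i = ∫ s in (0:ℝ)..sbar, g s i := by
    intro g hg i
    exact ((ContinuousLinearMap.proj (R := ℝ) (φ := fun _ : Fin 3 => ℝ)
      i).intervalIntegral_comp_comm (hg.intervalIntegrable 0 sbar)).symm
  have cJ : Continuous (fun s => (![ (fun s => Psz C D ν x₁ x₂ u s 0 * deriv x₂ s - Szf D ν x₁ x₂ u s 0 * deriv x₁ s) s + deriv (G₀ C D ν x₁ x₂ u) s,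
        (fun s => -(Psz C D ν x₁ x₂ u s 0 * deriv x₁ s) - Szf D ν x₁ x₂ u s 0 * deriv x₂ s) s + deriv (G₁ C D ν x₁ x₂ u) s,
        deriv (G₂ C D ν x₁ x₂ u) s ] : Fin 3 → ℝ)) := by
    apply continuous_pi
    intro i
    fin_cases i
    · simpa [Pi.add_def] using (cK0.add cG0')
    · simpa [Pi.add_def] using (cK1.add cG1')
    · simpa using cG2'
  have cR : Continuous (fun s => (Psz C D ν x₁ x₂ u s 0 • tau x₁ x₂ s + Pzz C ν x₁ x₂ u s 0 • e3
      + Szf D ν x₁ x₂ u s 0 • nrm x₁ x₂ s)) := by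
    apply continuous_pi
    intro i
    have h1 := c6.mul (continuous_pi_iff.mp (contDiff_tau hx₁ hx₂).continuous i)
    have h2 := c8.mul (continuous_const (y := e3 i))
    have h3 := c7.mul (continuous_pi_iff.mp (contDiff_nrm hx₁ hx₂).continuous i)
    simpa [Pi.smul_apply, smul_eq_mul, Pi.add_def, Pi.mul_def] using (h1.add h2).add h3
  -- Rres components
  have r1 : Rres C D ν x₁ x₂ sbar u 1 = -∫ s in (0:ℝ)..sbar, (fun s => Psz C D ν x₁ x₂ u s 0 * deriv x₂ s - Szf D ν x₁ x₂ u s 0 * deriv x₁ s) s := by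
    unfold Rres
    rw [Pi.neg_apply, hproj _ cR 1]
    congr 1
    refine intervalIntegral.integral_congr fun s _ => ?_
    simp only [tau, nrm, e3, Pi.add_apply, Pi.smul_apply, smul_eq_mul,
      Matrix.cons_val_zero, Matrix.cons_val_one, Matrix.head_cons]
    ring
  have r0 : Rres C D ν x₁ x₂ sbar u 0 = ∫ s in (0:ℝ)..sbar, (fun s => -(Psz C D ν x₁ x₂ u s 0 * deriv x₁ s) - Szf D ν x₁ x₂ u s 0 * deriv x₂ s) s := by
    unfold Rres
    rw [Pi.neg_apply, hproj _ cR 0, ← intervalIntegral.integral_neg]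
    refine intervalIntegral.integral_congr fun s _ => ?_
    simp only [tau, nrm, e3, Pi.add_apply, Pi.smul_apply, smul_eq_mul,
      Matrix.cons_val_zero, Matrix.cons_val_one, Matrix.head_cons]
    ring
  rw [hIJ]
  funext i
  fin_cases i
  · show -((∫ s in (0:ℝ)..sbar, (fun s => (![ (fun s => Psz C D ν x₁ x₂ u s 0 * deriv x₂ s - Szf D ν x₁ x₂ u s 0 * deriv x₁ s) s + deriv (G₀ C D ν x₁ x₂ u) s,
        (fun s => -(Psz C D ν x₁ x₂ u s 0 * deriv x₁ s) - Szf D ν x₁ x₂ u s 0 * deriv x₂ s) s + deriv (G₁ C D ν x₁ x₂ u) s,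
        deriv (G₂ C D ν x₁ x₂ u) s ] : Fin 3 → ℝ)) s) 0) = Rres C D ν x₁ x₂ sbar u 1
    rw [hproj _ cJ 0, r1]
    congr 1
  · show -((∫ s in (0:ℝ)..sbar, (fun s => (![ (fun s => Psz C D ν x₁ x₂ u s 0 * deriv x₂ s - Szf D ν x₁ x₂ u s 0 * deriv x₁ s) s + deriv (G₀ C D ν x₁ x₂ u) s,
        (fun s => -(Psz C D ν x₁ x₂ u s 0 * deriv x₁ s) - Szf D ν x₁ x₂ u s 0 * deriv x₂ s) s + deriv (G₁ C D ν x₁ x₂ u) s,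
        deriv (G₂ C D ν x₁ x₂ u) s ] : Fin 3 → ℝ)) s) 1) = -Rres C D ν x₁ x₂ sbar u 0
    rw [hproj _ cJ 1, r0]
    congr 1
  · show -((∫ s in (0:ℝ)..sbar, (fun s => (![ (fun s => Psz C D ν x₁ x₂ u s 0 * deriv x₂ s - Szf D ν x₁ x₂ u s 0 * deriv x₁ s) s + deriv (G₀ C D ν x₁ x₂ u) s,
        (fun s => -(Psz C D ν x₁ x₂ u s 0 * deriv x₁ s) - Szf D ν x₁ x₂ u s 0 * deriv x₂ s) s + deriv (G₁ C D ν x₁ x₂ u) s,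
        deriv (G₂ C D ν x₁ x₂ u) s ] : Fin 3 → ℝ)) s) 2) = 0
    rw [hproj _ cJ 2,
      show (fun s => (fun s => (![ (fun s => Psz C D ν x₁ x₂ u s 0 * deriv x₂ s - Szf D ν x₁ x₂ u s 0 * deriv x₁ s) s + deriv (G₀ C D ν x₁ x₂ u) s,
        (fun s => -(Psz C D ν x₁ x₂ u s 0 * deriv x₁ s) - Szf D ν x₁ x₂ u s 0 * deriv x₂ s) s + deriv (G₁ C D ν x₁ x₂ u) s,
        deriv (G₂ C D ν x₁ x₂ u) s ] : Fin 3 → ℝ)) s 2) = fun s => deriv (G₂ C D ν x₁ x₂ u) s from rfl,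
      e2, neg_zero]
end
end

section
/- (Cross-sectional force resultant is independent of the axial coordinate; this is why the end-edge conditions at z = ℓ are automatically satisfied.) If u : ℝ² → ℝ³ is a smooth map, s̄-periodic in s, satisfying the three equilibrium equations on ℝ², then the vector-valued function F(z) = ∫₀^{s̄} (P_sz τ + P_zz e₃ + S_z n)(s, z) ds is constant in z ∈ ℝ. -/
open Real MeasureTheory intervalIntegral

noncomputable section

open scoped ContDiff

section AuxSM

variable {E : Type*} [NormedAddCommGroup E] [NormedSpace ℝ E]

/-- Joint smoothness of a two-variable map. -/
def SM (f : ℝ → ℝ → E) : Prop := ContDiff ℝ ((⊤ : ℕ∞) : WithTop ℕ∞) (fun p : ℝ × ℝ => f p.1 p.2)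

theorem SM.contDiff {f : ℝ → ℝ → E} (h : SM f) :
    ContDiff ℝ ((⊤ : ℕ∞) : WithTop ℕ∞) (fun p : ℝ × ℝ => f p.1 p.2) := h

theorem one_le_inftyR : (1 : WithTop ℕ∞) ≤ ((⊤ : ℕ∞) : WithTop ℕ∞) := by
  exact_mod_cast le_top

theorem SM.hasDerivAt_fst {f : ℝ → ℝ → E} (h : SM f) (s z : ℝ) :
    HasDerivAt (fun t => f t z) (deriv (fun t => f t z) s) s := by
  have hd : DifferentiableAt ℝ (fun t => f t z) s := by
    have hg : DifferentiableAt ℝ (fun q : ℝ × ℝ => f q.1 q.2) (s, z) :=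
      h.contDiff.differentiable (by simp) (s, z)
    have hf : DifferentiableAt ℝ (fun t : ℝ => (t, z)) s :=
      differentiableAt_id.prodMk (differentiableAt_const z)
    exact hg.comp s hf
  exact hd.hasDerivAt

theorem SM.hasDerivAt_snd {f : ℝ → ℝ → E} (h : SM f) (s z : ℝ) :
    HasDerivAt (fun t => f s t) (deriv (fun t => f s t) z) z := by
  have hd : DifferentiableAt ℝ (fun t => f s t) z := by
    have hg : DifferentiableAt ℝ (fun q : ℝ × ℝ => f q.1 q.2) (s, z) :=
      h.contDiff.differentiable (by simp) (s, z)
    have hf : DifferentiableAt ℝ (fun t : ℝ => (s, t)) z :=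
      (differentiableAt_const s).prodMk differentiableAt_id
    exact hg.comp z hf
  exact hd.hasDerivAt

theorem SM.deriv_fst {f : ℝ → ℝ → E} (h : SM f) :
    SM (fun s z => deriv (fun t => f t z) s) := by
  have key : ∀ p : ℝ × ℝ, deriv (fun t => f t p.2) p.1
      = fderiv ℝ (fun q : ℝ × ℝ => f q.1 q.2) p (1, 0) := by
    intro p
    have h1 : HasDerivAt (fun t : ℝ => (t, p.2)) ((1 : ℝ), (0 : ℝ)) p.1 :=
      (hasDerivAt_id p.1).prodMk (hasDerivAt_const p.1 p.2)
    have h2 := ((h.contDiff.differentiable (by simp) (p.1, p.2)).hasFDerivAt).comp_hasDerivAt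
      p.1 h1
    simpa [Function.comp_def] using h2.deriv
  have : (fun p : ℝ × ℝ => deriv (fun t => f t p.2) p.1)
      = fun p => fderiv ℝ (fun q : ℝ × ℝ => f q.1 q.2) p (1, 0) := funext key
  show ContDiff ℝ _ (fun p : ℝ × ℝ => deriv (fun t => f t p.2) p.1)
  rw [this]
  exact (h.contDiff.fderiv_right (le_refl _)).clm_apply contDiff_const

theorem SM.deriv_snd {f : ℝ → ℝ → E} (h : SM f) :
    SM (fun s z => deriv (fun t => f s t) z) := by
  have key : ∀ p : ℝ × ℝ, deriv (fun t => f p.1 t) p.2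
      = fderiv ℝ (fun q : ℝ × ℝ => f q.1 q.2) p (0, 1) := by
    intro p
    have h1 : HasDerivAt (fun t : ℝ => (p.1, t)) ((0 : ℝ), (1 : ℝ)) p.2 :=
      (hasDerivAt_const p.2 p.1).prodMk (hasDerivAt_id p.2)
    have h2 := ((h.contDiff.differentiable (by simp) (p.1, p.2)).hasFDerivAt).comp_hasDerivAt
      p.2 h1
    simpa [Function.comp_def] using h2.deriv
  have : (fun p : ℝ × ℝ => deriv (fun t => f p.1 t) p.2)
      = fun p => fderiv ℝ (fun q : ℝ × ℝ => f q.1 q.2) p (0, 1) := funext key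
  show ContDiff ℝ _ (fun p : ℝ × ℝ => deriv (fun t => f p.1 t) p.2)
  rw [this]
  exact (h.contDiff.fderiv_right (le_refl _)).clm_apply contDiff_const

theorem SM.continuous2 {f : ℝ → ℝ → E} (h : SM f) :
    Continuous (fun p : ℝ × ℝ => f p.1 p.2) := h.contDiff.continuous

theorem SM.continuous_fst {f : ℝ → ℝ → E} (h : SM f) (z : ℝ) :
    Continuous (fun s => f s z) :=
  h.continuous2.comp (continuous_id.prodMk continuous_const)

theorem SM.continuous_snd {f : ℝ → ℝ → E} (h : SM f) (s : ℝ) :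
    Continuous (fun z => f s z) :=
  h.continuous2.comp (continuous_const.prodMk continuous_id)

theorem SM.constV (e : E) : SM (fun _ _ : ℝ => e) := contDiff_const

theorem SM.of_fst {φ : ℝ → E} (hφ : ContDiff ℝ ((⊤ : ℕ∞) : WithTop ℕ∞) φ) :
    SM (fun s (_ : ℝ) => φ s) := hφ.comp contDiff_fst

theorem SM.add {f g : ℝ → ℝ → E} (hf : SM f) (hg : SM g) : SM (fun s z => f s z + g s z) :=
  hf.contDiff.add hg.contDiff

theorem SM.sub {f g : ℝ → ℝ → E} (hf : SM f) (hg : SM g) : SM (fun s z => f s z - g s z) :=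
  hf.contDiff.sub hg.contDiff

theorem SM.neg {f : ℝ → ℝ → E} (hf : SM f) : SM (fun s z => -f s z) := hf.contDiff.neg

theorem SM.mul {f g : ℝ → ℝ → ℝ} (hf : SM f) (hg : SM g) : SM (fun s z => f s z * g s z) :=
  hf.contDiff.mul hg.contDiff

theorem SM.smul {f : ℝ → ℝ → ℝ} {g : ℝ → ℝ → E} (hf : SM f) (hg : SM g) :
    SM (fun s z => f s z • g s z) := hf.contDiff.smul hg.contDiff

theorem SM.apply {ι : Type*} [Fintype ι] {v : ℝ → ℝ → ι → ℝ} (h : SM v) (i : ι) :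
    SM (fun s z => v s z i) := contDiff_pi.mp h.contDiff i

/-- periodicity of the derivative of a periodic function. -/
theorem per_deriv {f : ℝ → E} {c : ℝ} (h : ∀ s, f (s + c) = f s) (s : ℝ) :
    deriv f (s + c) = deriv f s := by
  rw [← deriv_comp_add_const f c s]
  congr 1
  funext t
  exact h t

end AuxSM


section Aux2

theorem SM.dot3_fun {v : ℝ → ℝ → Fin 3 → ℝ} {w : ℝ → Fin 3 → ℝ} (hv : SM v)
    (hw : ContDiff ℝ ∞ w) : SM (fun s z => dot3 (v s z) (w s)) := by
  have hwi : ∀ i, ContDiff ℝ ∞ (fun s : ℝ => w s i) := fun i => contDiff_pi.mp hw i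
  exact (((hv.apply 0).mul (SM.of_fst (hwi 0))).add
    ((hv.apply 1).mul (SM.of_fst (hwi 1)))).add ((hv.apply 2).mul (SM.of_fst (hwi 2)))

theorem SM.const' (e : ℝ) : SM (fun _ _ : ℝ => e) := contDiff_const

/-- Abstract version of the conservation argument: if `Φ` has `z`-derivative `Φz`,
`Φz = -∂ₛ G` for a field `G` periodic in `s`, then `z ↦ ∫ Φ` is constant. -/
theorem const_of_flux (sbar : ℝ) (Φ Φz G : ℝ → ℝ → Fin 3 → ℝ)
    (hcΦ : Continuous (fun p : ℝ × ℝ => Φ p.1 p.2))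
    (hcΦz : Continuous (fun p : ℝ × ℝ => Φz p.1 p.2))
    (hΦderiv : ∀ s z, HasDerivAt (fun t => Φ s t) (Φz s z) z)
    (hGder : ∀ s z, HasDerivAt (fun t => G t z) (-(Φz s z)) s)
    (hGper : ∀ z, G sbar z = G 0 z) :
    ∀ z₁ z₂ : ℝ, (∫ s in (0:ℝ)..sbar, Φ s z₁) = ∫ s in (0:ℝ)..sbar, Φ s z₂ := by
  have key : ∀ z₀ : ℝ, HasDerivAt (fun z => ∫ s in (0:ℝ)..sbar, Φ s z) 0 z₀ := by
    intro z₀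
    obtain ⟨M, hM⟩ := (isCompact_uIcc.prod (isCompact_closedBall z₀ 1)).exists_bound_of_continuousOn
      (hcΦz.continuousOn)
    have hcont : ∀ x : ℝ, Continuous (fun t => Φ t x) := fun x =>
      hcΦ.comp (continuous_id.prodMk continuous_const)
    have hcontz : ∀ x : ℝ, Continuous (fun t => Φz t x) := fun x =>
      hcΦz.comp (continuous_id.prodMk continuous_const)
    have H := intervalIntegral.hasDerivAt_integral_of_dominated_loc_of_deriv_le
      (F := fun x t => Φ t x) (F' := fun x t => Φz t x) (x₀ := z₀) (a := 0) (b := sbar)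
      (bound := fun _ => M) (μ := MeasureTheory.volume) (Metric.ball_mem_nhds z₀ one_pos)
      (Filter.Eventually.of_forall fun x => (hcont x).aestronglyMeasurable.restrict)
      ((hcont z₀).intervalIntegrable 0 sbar)
      ((hcontz z₀).aestronglyMeasurable.restrict)
      (MeasureTheory.ae_of_all _ fun t ht x hx =>
        hM (t, x) (Set.mem_prod.mpr ⟨Set.uIoc_subset_uIcc ht, Metric.ball_subset_closedBall hx⟩))
      (intervalIntegrable_const)
      (MeasureTheory.ae_of_all _ fun t _ x _ => hΦderiv t x)
    have hzero : (∫ s in (0:ℝ)..sbar, Φz s z₀) = 0 := by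
      have h2 : deriv (fun t => G t z₀) = fun s => -(Φz s z₀) :=
        funext fun s => (hGder s z₀).deriv
      have h3 : IntervalIntegrable (deriv fun t => G t z₀) MeasureTheory.volume 0 sbar := by
        rw [h2]; exact ((hcontz z₀).neg).intervalIntegrable 0 sbar
      have h4 := intervalIntegral.integral_deriv_eq_sub
        (fun x _ => (hGder x z₀).differentiableAt) h3
      have h5 : (fun s => Φz s z₀) = fun s => -(deriv (fun t => G t z₀) s) := by
        rw [h2]; funext s; simp
      calc (∫ s in (0:ℝ)..sbar, Φz s z₀)
          = ∫ s in (0:ℝ)..sbar, -(deriv (fun t => G t z₀) s) := by rw [← h5]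
        _ = -(∫ s in (0:ℝ)..sbar, deriv (fun t => G t z₀) s) := intervalIntegral.integral_neg
        _ = -(G sbar z₀ - G 0 z₀) := by rw [h4]
        _ = 0 := by rw [hGper z₀, sub_self, neg_zero]
    exact hzero ▸ H.2
  exact fun z₁ z₂ => is_const_of_deriv_eq_zero (fun z => (key z).differentiableAt)
    (fun z => (key z).deriv) z₁ z₂

end Aux2

/-- for a smooth s̄-periodic equilibrium field u, the cross-sectional force
resultant F(z) = ∫₀^{s̄} (P_sz τ + P_zz e₃ + S_z n)(s, z) ds is independent of z. -/
theorem cross_sectional_force_resultant_constant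
    (C D ν sbar : ℝ) (hC : 0 < C) (hD : 0 < D) (hsbar : 0 < sbar)
    (x₁ x₂ : ℝ → ℝ)
    (hx₁ : ContDiff ℝ (⊤ : ℕ∞) x₁) (hx₂ : ContDiff ℝ (⊤ : ℕ∞) x₂)
    (hper₁ : ∀ s, x₁ (s + sbar) = x₁ s) (hper₂ : ∀ s, x₂ (s + sbar) = x₂ s)
    (harc : ∀ s, deriv x₁ s ^ 2 + deriv x₂ s ^ 2 = 1)
    (u : ℝ → ℝ → Fin 3 → ℝ)
    (hu : ContDiff ℝ (⊤ : ℕ∞) (fun p : ℝ × ℝ => u p.1 p.2))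
    (huper : ∀ s z, u (s + sbar) z = u s z)
    (heq : ∀ s z : ℝ, Equilib C D ν x₁ x₂ u s z) :
    ∀ z₁ z₂ : ℝ,
      (∫ s in (0:ℝ)..sbar,
        (Psz C D ν x₁ x₂ u s z₁ • tau x₁ x₂ s + Pzz C ν x₁ x₂ u s z₁ • e3
          + Szf D ν x₁ x₂ u s z₁ • nrm x₁ x₂ s))
      = ∫ s in (0:ℝ)..sbar,
        (Psz C D ν x₁ x₂ u s z₂ • tau x₁ x₂ s + Pzz C ν x₁ x₂ u s z₂ • e3
          + Szf D ν x₁ x₂ u s z₂ • nrm x₁ x₂ s) := by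
  intro z₁ z₂

  -- downgrade analytic hypotheses to C^∞
  have hx1 : ContDiff ℝ ∞ x₁ := hx₁.of_le (by simp)
  have hx2 : ContDiff ℝ ∞ x₂ := hx₂.of_le (by simp)
  have hx1d : ContDiff ℝ ∞ (deriv x₁) := (contDiff_infty_iff_deriv.mp hx1).2
  have hx2d : ContDiff ℝ ∞ (deriv x₂) := (contDiff_infty_iff_deriv.mp hx2).2
  have hx1dd : ContDiff ℝ ∞ (deriv (deriv x₁)) := (contDiff_infty_iff_deriv.mp hx1d).2
  have hx2dd : ContDiff ℝ ∞ (deriv (deriv x₂)) := (contDiff_infty_iff_deriv.mp hx2d).2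
  have htau : ContDiff ℝ ∞ (tau x₁ x₂) := by
    rw [contDiff_pi]
    intro i
    fin_cases i
    · simpa [tau] using hx1d
    · simpa [tau] using hx2d
    · simpa [tau] using contDiff_const (c := (0:ℝ))
  have hnrm : ContDiff ℝ ∞ (nrm x₁ x₂) := by
    rw [contDiff_pi]
    intro i
    fin_cases i
    · simpa [nrm] using hx2d
    · simpa [nrm] using hx1d.neg
    · simpa [nrm] using contDiff_const (c := (0:ℝ))
  have hkap : ContDiff ℝ ∞ (kap x₁ x₂) := (hx1d.mul hx2dd).sub (hx2d.mul hx1dd)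
  -- joint smoothness of all the fields
  have hU : SM u := hu.of_le (by simp)
  have hUs : SM (pds u) := hU.deriv_fst
  have hUz : SM (pdz u) := hU.deriv_snd
  have hUss : SM (pds (pds u)) := hUs.deriv_fst
  have hUzs : SM (pds (pdz u)) := hUz.deriv_fst
  have hUzz : SM (pdz (pdz u)) := hUz.deriv_snd
  have hess : SM (epsSS x₁ x₂ u) := hUs.dot3_fun htau
  have hesz : SM (epsSZ x₁ x₂ u) :=
    (SM.const' (1/2)).mul ((hUz.dot3_fun htau).add (hUs.dot3_fun contDiff_const))
  have hezz : SM (epsZZ u) := hUz.dot3_fun contDiff_const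
  have hrss : SM (rhoSS x₁ x₂ u) := hUss.dot3_fun hnrm
  have hrsz : SM (rhoSZ x₁ x₂ u) := hUzs.dot3_fun hnrm
  have hrzz : SM (rhoZZ x₁ x₂ u) := hUzz.dot3_fun hnrm
  have hNss : SM (Nss C ν x₁ x₂ u) := (SM.const' C).mul (hess.add ((SM.const' ν).mul hezz))
  have hNsz : SM (Nsz C ν x₁ x₂ u) := (SM.const' (C * (1 - ν))).mul hesz
  have hNzz : SM (Nzz C ν x₁ x₂ u) := (SM.const' C).mul (((SM.const' ν).mul hess).add hezz)
  have hMss : SM (Mss D ν x₁ x₂ u) := (SM.const' D).mul (hrss.add ((SM.const' ν).mul hrzz))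
  have hMsz : SM (Msz D ν x₁ x₂ u) := (SM.const' (D * (1 - ν))).mul hrsz
  have hMzz : SM (Mzz D ν x₁ x₂ u) := (SM.const' D).mul (((SM.const' ν).mul hrss).add hrzz)
  have hPss : SM (Pss C D ν x₁ x₂ u) := hNss.sub ((SM.of_fst hkap).mul hMss)
  have hPsz : SM (Psz C D ν x₁ x₂ u) := hNsz.sub ((SM.of_fst hkap).mul hMsz)
  have hPzs : SM (Pzs C ν x₁ x₂ u) := hNsz
  have hPzz : SM (Pzz C ν x₁ x₂ u) := hNzz
  have hSsf : SM (Ssf D ν x₁ x₂ u) := (hMss.deriv_fst.neg).sub hMsz.deriv_snd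
  have hSzf : SM (Szf D ν x₁ x₂ u) := (hMsz.deriv_fst.neg).sub hMzz.deriv_snd
  -- the flux fields
  set Φ : ℝ → ℝ → Fin 3 → ℝ := fun s z =>
    Psz C D ν x₁ x₂ u s z • tau x₁ x₂ s + Pzz C ν x₁ x₂ u s z • e3
      + Szf D ν x₁ x₂ u s z • nrm x₁ x₂ s with hΦdef
  set Φz : ℝ → ℝ → Fin 3 → ℝ := fun s z =>
    sdz (Psz C D ν x₁ x₂ u) s z • tau x₁ x₂ s + sdz (Pzz C ν x₁ x₂ u) s z • e3
      + sdz (Szf D ν x₁ x₂ u) s z • nrm x₁ x₂ s with hΦzdef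
  set G : ℝ → ℝ → Fin 3 → ℝ := fun s z =>
    Pss C D ν x₁ x₂ u s z • tau x₁ x₂ s + Pzs C ν x₁ x₂ u s z • e3
      + Ssf D ν x₁ x₂ u s z • nrm x₁ x₂ s with hGdef
  have hcΦ : Continuous (fun p : ℝ × ℝ => Φ p.1 p.2) :=
    SM.continuous2 (((hPsz.smul (SM.of_fst htau)).add (hPzz.smul (SM.constV e3))).add
      (hSzf.smul (SM.of_fst hnrm)))
  have hcΦz : Continuous (fun p : ℝ × ℝ => Φz p.1 p.2) :=
    SM.continuous2 (((hPsz.deriv_snd.smul (SM.of_fst htau)).add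
      (hPzz.deriv_snd.smul (SM.constV e3))).add (hSzf.deriv_snd.smul (SM.of_fst hnrm)))
  -- z-derivative of Φ
  have hΦderiv : ∀ s z, HasDerivAt (fun t => Φ s t) (Φz s z) z := by
    intro s z
    have d1 := (hPsz.hasDerivAt_snd s z).smul_const (tau x₁ x₂ s)
    have d2 := (hPzz.hasDerivAt_snd s z).smul_const (e3 : Fin 3 → ℝ)
    have d3 := (hSzf.hasDerivAt_snd s z).smul_const (nrm x₁ x₂ s)
    exact (d1.add d2).add d3
  -- Frenet relations
  have hdd : ∀ s, deriv x₁ s * deriv (deriv x₁) s + deriv x₂ s * deriv (deriv x₂) s = 0 := by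
    intro s
    have a1 : HasDerivAt (deriv x₁) (deriv (deriv x₁) s) s :=
      ((hx1d.differentiable (by simp)) s).hasDerivAt
    have a2 : HasDerivAt (deriv x₂) (deriv (deriv x₂) s) s :=
      ((hx2d.differentiable (by simp)) s).hasDerivAt
    have h1 : HasDerivAt (fun t => deriv x₁ t ^ 2 + deriv x₂ t ^ 2)
        ((2 : ℕ) * deriv x₁ s ^ 1 * deriv (deriv x₁) s
          + (2 : ℕ) * deriv x₂ s ^ 1 * deriv (deriv x₂) s) s := (a1.pow 2).add (a2.pow 2)
    have h2 : (fun t => deriv x₁ t ^ 2 + deriv x₂ t ^ 2) = fun _ => (1:ℝ) := funext harc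
    rw [h2] at h1
    have h3 := (hasDerivAt_const s (1:ℝ)).unique h1
    simp at h3
    nlinarith [h3]
  have hk1 : ∀ s, kap x₁ x₂ s * deriv x₂ s = - deriv (deriv x₁) s := by
    intro s
    have h := hdd s
    have h2 := harc s
    simp only [kap]
    linear_combination deriv x₁ s * h - deriv (deriv x₁) s * h2
  have hk2 : ∀ s, kap x₁ x₂ s * deriv x₁ s = deriv (deriv x₂) s := by
    intro s
    have h := hdd s
    have h2 := harc s
    simp only [kap]
    linear_combination (-deriv x₂ s) * h + deriv (deriv x₂) s * h2
  have htau' : ∀ s, HasDerivAt (tau x₁ x₂) ((-(kap x₁ x₂ s)) • nrm x₁ x₂ s) s := by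
    intro s
    have hcomp : HasDerivAt (tau x₁ x₂) (![deriv (deriv x₁) s, deriv (deriv x₂) s, 0]) s := by
      rw [hasDerivAt_pi]
      intro i
      fin_cases i
      · simpa [tau] using ((hx1d.differentiable (by simp)) s).hasDerivAt
      · simpa [tau] using ((hx2d.differentiable (by simp)) s).hasDerivAt
      · simpa [tau] using hasDerivAt_const s (0:ℝ)
    convert hcomp using 1
    funext i
    fin_cases i
    · simp [nrm]
      linarith [hk1 s]
    · simp [nrm]
      linarith [hk2 s]
    · simp [nrm]
  have hnrm' : ∀ s, HasDerivAt (nrm x₁ x₂) ((kap x₁ x₂ s) • tau x₁ x₂ s) s := by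
    intro s
    have hcomp : HasDerivAt (nrm x₁ x₂) (![deriv (deriv x₂) s, -deriv (deriv x₁) s, 0]) s := by
      rw [hasDerivAt_pi]
      intro i
      fin_cases i
      · simpa [nrm] using ((hx2d.differentiable (by simp)) s).hasDerivAt
      · simpa [nrm] using (((hx1d.differentiable (by simp)) s).hasDerivAt).fun_neg
      · simpa [nrm] using hasDerivAt_const s (0:ℝ)
    convert hcomp using 1
    funext i
    fin_cases i
    · simp [tau]
      linarith [hk2 s]
    · simp [tau]
      linarith [hk1 s]
    · simp [tau]
  -- s-derivative of G equals -Φz (uses the equilibrium equations)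
  have hGder : ∀ s z, HasDerivAt (fun t => G t z) (-(Φz s z)) s := by
    intro s z
    have d1 := (hPss.hasDerivAt_fst s z).smul (htau' s)
    have d2 := (hPzs.hasDerivAt_fst s z).smul_const (e3 : Fin 3 → ℝ)
    have d3 := (hSsf.hasDerivAt_fst s z).smul (hnrm' s)
    have dG := (d1.add d2).add d3
    refine dG.congr_deriv ?_
    obtain ⟨q1, q2, q3⟩ := heq s z
    unfold sds sdz at q1 q2 q3
    have r1 : deriv (fun t => Psz C D ν x₁ x₂ u s t) z
        = -(deriv (fun t => Pss C D ν x₁ x₂ u t z) s)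
          - kap x₁ x₂ s * Ssf D ν x₁ x₂ u s z := by linarith
    have r2 : deriv (fun t => Pzz C ν x₁ x₂ u s t) z
        = -(deriv (fun t => Pzs C ν x₁ x₂ u t z) s) := by linarith
    have r3 : deriv (fun t => Szf D ν x₁ x₂ u s t) z
        = -(deriv (fun t => Ssf D ν x₁ x₂ u t z) s)
          + kap x₁ x₂ s * Pss C D ν x₁ x₂ u s z := by linarith
    simp only [hΦzdef]
    unfold sdz
    rw [r1, r2, r3]
    module
  -- periodicity of G in s
  -- periodicity in s of all relevant fields
  have px1d : ∀ s, deriv x₁ (s + sbar) = deriv x₁ s := per_deriv hper₁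
  have px2d : ∀ s, deriv x₂ (s + sbar) = deriv x₂ s := per_deriv hper₂
  have px1dd : ∀ s, deriv (deriv x₁) (s + sbar) = deriv (deriv x₁) s := per_deriv px1d
  have px2dd : ∀ s, deriv (deriv x₂) (s + sbar) = deriv (deriv x₂) s := per_deriv px2d
  have ptau : ∀ s, tau x₁ x₂ (s + sbar) = tau x₁ x₂ s := by
    intro s; unfold tau; rw [px1d, px2d]
  have pnrm : ∀ s, nrm x₁ x₂ (s + sbar) = nrm x₁ x₂ s := by
    intro s; unfold nrm; rw [px1d, px2d]
  have pkap : ∀ s, kap x₁ x₂ (s + sbar) = kap x₁ x₂ s := by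
    intro s; unfold kap; rw [px1d, px2d, px1dd, px2dd]
  have ppds : ∀ s z, pds u (s + sbar) z = pds u s z := fun s z =>
    per_deriv (fun t => huper t z) s
  have ppdz : ∀ s z, pdz u (s + sbar) z = pdz u s z := by
    intro s z
    show deriv (fun t => u (s + sbar) t) z = deriv (fun t => u s t) z
    congr 1; funext t; exact huper s t
  have ppss : ∀ s z, pds (pds u) (s + sbar) z = pds (pds u) s z := fun s z =>
    per_deriv (fun t => ppds t z) s
  have ppzs : ∀ s z, pds (pdz u) (s + sbar) z = pds (pdz u) s z := fun s z =>
    per_deriv (fun t => ppdz t z) s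
  have ppzz : ∀ s z, pdz (pdz u) (s + sbar) z = pdz (pdz u) s z := by
    intro s z
    show deriv (fun t => pdz u (s + sbar) t) z = deriv (fun t => pdz u s t) z
    congr 1; funext t; exact ppdz s t
  have pess : ∀ s z, epsSS x₁ x₂ u (s + sbar) z = epsSS x₁ x₂ u s z := by
    intro s z; unfold epsSS; rw [ppds, ptau]
  have pesz : ∀ s z, epsSZ x₁ x₂ u (s + sbar) z = epsSZ x₁ x₂ u s z := by
    intro s z; unfold epsSZ; rw [ppdz, ppds, ptau]
  have pezz : ∀ s z, epsZZ u (s + sbar) z = epsZZ u s z := by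
    intro s z; unfold epsZZ; rw [ppdz]
  have prss : ∀ s z, rhoSS x₁ x₂ u (s + sbar) z = rhoSS x₁ x₂ u s z := by
    intro s z; unfold rhoSS; rw [ppss, pnrm]
  have prsz : ∀ s z, rhoSZ x₁ x₂ u (s + sbar) z = rhoSZ x₁ x₂ u s z := by
    intro s z; unfold rhoSZ; rw [ppzs, pnrm]
  have przz : ∀ s z, rhoZZ x₁ x₂ u (s + sbar) z = rhoZZ x₁ x₂ u s z := by
    intro s z; unfold rhoZZ; rw [ppzz, pnrm]
  have pNss : ∀ s z, Nss C ν x₁ x₂ u (s + sbar) z = Nss C ν x₁ x₂ u s z := by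
    intro s z; unfold Nss; rw [pess, pezz]
  have pNsz : ∀ s z, Nsz C ν x₁ x₂ u (s + sbar) z = Nsz C ν x₁ x₂ u s z := by
    intro s z; unfold Nsz; rw [pesz]
  have pMss : ∀ s z, Mss D ν x₁ x₂ u (s + sbar) z = Mss D ν x₁ x₂ u s z := by
    intro s z; unfold Mss; rw [prss, przz]
  have pMsz : ∀ s z, Msz D ν x₁ x₂ u (s + sbar) z = Msz D ν x₁ x₂ u s z := by
    intro s z; unfold Msz; rw [prsz]
  have pPss : ∀ s z, Pss C D ν x₁ x₂ u (s + sbar) z = Pss C D ν x₁ x₂ u s z := by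
    intro s z; unfold Pss; rw [pNss, pkap, pMss]
  have pPzs : ∀ s z, Pzs C ν x₁ x₂ u (s + sbar) z = Pzs C ν x₁ x₂ u s z := by
    intro s z; unfold Pzs; rw [pNsz]
  have pSsf : ∀ s z, Ssf D ν x₁ x₂ u (s + sbar) z = Ssf D ν x₁ x₂ u s z := by
    intro s z
    unfold Ssf
    have h1 : sds (Mss D ν x₁ x₂ u) (s + sbar) z = sds (Mss D ν x₁ x₂ u) s z :=
      per_deriv (fun t => pMss t z) s
    have h2 : sdz (Msz D ν x₁ x₂ u) (s + sbar) z = sdz (Msz D ν x₁ x₂ u) s z := by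
      show deriv (fun t => Msz D ν x₁ x₂ u (s + sbar) t) z
          = deriv (fun t => Msz D ν x₁ x₂ u s t) z
      congr 1; funext t; exact pMsz s t
    rw [h1, h2]
  have hGper : ∀ z, G sbar z = G 0 z := by
    intro z
    have h : G (0 + sbar) z = G 0 z := by
      simp only [hGdef]
      rw [pPss, pPzs, pSsf, ptau, pnrm]
    simpa using h
  exact const_of_flux sbar Φ Φz G hcΦ hcΦz hΦderiv hGder hGper z₁ z₂
end
end

section
/- (Stresses of the extension–bending–torsion solution, eqs. (43).) Let A = (A₁, A₂, A₃), B = (B₁, B₂, B₃) ∈ ℝ³, K ∈ ℝ, and let w = (w₁, w₂, w₃) : ℝ → ℝ³ be smooth and satisfy, for all s: w'(s) · τ(s) = −ν(A · r̂(s)) − (1/C)[B₁n₁ + B₂n₂ + κ(s)(B · r̂(s))], w''(s) · n(s) = ν(A₁n₁ + A₂n₂) − (1/D)(B · r̂(s)), and w₃(s) = K φ(s). Define u(s, z) = −(½z²A₁ + Kz x₂(s)) e₁ − (½z²A₂ − Kz x₁(s)) e₂ + z (A · r̂(s)) e₃ + w(s). Then the Koiter stresses of u are: N_ss = −[B₁n₁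 + B₂n₂ + κ(B · r̂)], N_sz = C(1 − ν)K𝒜/s̄, N_zz = C(1 − ν²)(A · r̂) − ν[B₁n₁ + B₂n₂ + κ(B · r̂)], M_ss = −(B · r̂), M_sz = −D(1 − ν)K, M_zz = −D(1 − ν²)(A₁n₁ + A₂n₂) − ν(B · r̂); in particular they are independent of z. -/
open Real MeasureTheory intervalIntegral

noncomputable section

/-- The extension–bending–torsion ansatz
u(s,z) = −(½z²A₁ + Kz x₂)e₁ − (½z²A₂ − Kz x₁)e₂ + z(A·r̂)e₃ + w(s). -/
def ebtAnsatz (x₁ x₂ : ℝ → ℝ) (sbar : ℝ) (A : Fin 3 → ℝ) (K : ℝ) (w : ℝ → Fin 3 → ℝ)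
    (s z : ℝ) : Fin 3 → ℝ :=
  (-(z ^ 2 / 2 * A 0 + K * z * x₂ s)) • e1 + (-(z ^ 2 / 2 * A 1 - K * z * x₁ s)) • e2
    + (z * dot3 A (rhat x₁ x₂ sbar s)) • e3 + w s

/-- eqs. (43): the Koiter stresses of the extension–bending–torsion solution
are independent of z and have the stated closed forms. -/
theorem stresses_of_ebt_solution
    (C D ν sbar : ℝ) (hC : 0 < C) (hD : 0 < D) (hsbar : 0 < sbar)
    (x₁ x₂ : ℝ → ℝ)
    (hx₁ : ContDiff ℝ (⊤ : ℕ∞) x₁) (hx₂ : ContDiff ℝ (⊤ : ℕ∞) x₂)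
    (hper₁ : ∀ s, x₁ (s + sbar) = x₁ s) (hper₂ : ∀ s, x₂ (s + sbar) = x₂ s)
    (harc : ∀ s, deriv x₁ s ^ 2 + deriv x₂ s ^ 2 = 1)
    (A B : Fin 3 → ℝ) (K : ℝ) (w : ℝ → Fin 3 → ℝ) (hw : ContDiff ℝ (⊤ : ℕ∞) w)
    (hw1 : ∀ s, dot3 (deriv w s) (tau x₁ x₂ s)
      = -(ν * dot3 A (rhat x₁ x₂ sbar s))
        - (1 / C) * (B 0 * nrm x₁ x₂ s 0 + B 1 * nrm x₁ x₂ s 1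
            + kap x₁ x₂ s * dot3 B (rhat x₁ x₂ sbar s)))
    (hw2 : ∀ s, dot3 (deriv (deriv w) s) (nrm x₁ x₂ s)
      = ν * (A 0 * nrm x₁ x₂ s 0 + A 1 * nrm x₁ x₂ s 1)
        - (1 / D) * dot3 B (rhat x₁ x₂ sbar s))
    (hw3 : ∀ s, w s 2 = K * tors x₁ x₂ sbar s) :
    ∀ s z : ℝ,
      Nss C ν x₁ x₂ (ebtAnsatz x₁ x₂ sbar A K w) s z
        = -(B 0 * nrm x₁ x₂ s 0 + B 1 * nrm x₁ x₂ s 1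
            + kap x₁ x₂ s * dot3 B (rhat x₁ x₂ sbar s)) ∧
      Nsz C ν x₁ x₂ (ebtAnsatz x₁ x₂ sbar A K w) s z
        = C * (1 - ν) * K * area2 x₁ x₂ sbar / sbar ∧
      Nzz C ν x₁ x₂ (ebtAnsatz x₁ x₂ sbar A K w) s z
        = C * (1 - ν ^ 2) * dot3 A (rhat x₁ x₂ sbar s)
          - ν * (B 0 * nrm x₁ x₂ s 0 + B 1 * nrm x₁ x₂ s 1
              + kap x₁ x₂ s * dot3 B (rhat x₁ x₂ sbar s)) ∧
      Mss D ν x₁ x₂ (ebtAnsatz x₁ x₂ sbar A K w) s z = -dot3 B (rhat x₁ x₂ sbar s) ∧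
      Msz D ν x₁ x₂ (ebtAnsatz x₁ x₂ sbar A K w) s z = -(D * (1 - ν) * K) ∧
      Mzz D ν x₁ x₂ (ebtAnsatz x₁ x₂ sbar A K w) s z
        = -(D * (1 - ν ^ 2) * (A 0 * nrm x₁ x₂ s 0 + A 1 * nrm x₁ x₂ s 1))
          - ν * dot3 B (rhat x₁ x₂ sbar s) := by

  have hdx₁ : Differentiable ℝ x₁ := hx₁.differentiable (by simp)
  have hdx₂ : Differentiable ℝ x₂ := hx₂.differentiable (by simp)
  have hx₁' : ContDiff ℝ ((⊤ : ℕ∞) : WithTop ℕ∞) (deriv x₁) :=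
    (contDiff_infty_iff_deriv.mp (hx₁.of_le (by simp))).2
  have hx₂' : ContDiff ℝ ((⊤ : ℕ∞) : WithTop ℕ∞) (deriv x₂) :=
    (contDiff_infty_iff_deriv.mp (hx₂.of_le (by simp))).2
  have hdx₁' : Differentiable ℝ (deriv x₁) := hx₁'.differentiable (by simp)
  have hdx₂' : Differentiable ℝ (deriv x₂) := hx₂'.differentiable (by simp)
  have hdw : Differentiable ℝ w := hw.differentiable (by simp)
  have hw' : ContDiff ℝ ((⊤ : ℕ∞) : WithTop ℕ∞) (deriv w) :=
    (contDiff_infty_iff_deriv.mp (hw.of_le (by simp))).2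
  have hdw' : Differentiable ℝ (deriv w) := hw'.differentiable (by simp)
  have hwc : ∀ (i : Fin 3) (t : ℝ), HasDerivAt (fun r => w r i) (deriv w t i) t :=
    fun i t => hasDerivAt_pi.mp (hdw t).hasDerivAt i
  have harc' : ∀ t : ℝ,
      deriv x₁ t * deriv (deriv x₁) t + deriv x₂ t * deriv (deriv x₂) t = 0 := by
    intro t
    have h1 : HasDerivAt (fun r => deriv x₁ r ^ 2 + deriv x₂ r ^ 2)
        (2 * deriv x₁ t * deriv (deriv x₁) t + 2 * deriv x₂ t * deriv (deriv x₂) t) t := by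
      have h := ((hdx₁' t).hasDerivAt.pow 2).add ((hdx₂' t).hasDerivAt.pow 2)
      exact h.congr_deriv (by ring)
    have h2 : (fun r => deriv x₁ r ^ 2 + deriv x₂ r ^ 2) = fun _ => (1 : ℝ) := funext harc
    rw [h2] at h1
    have h3 := h1.deriv
    rw [deriv_const] at h3
    linarith
  -- derivative of s ↦ dot3 A (rhat s)
  have hAr : ∀ (V : Fin 3 → ℝ) (t : ℝ), HasDerivAt (fun r => dot3 V (rhat x₁ x₂ sbar r))
      (V 0 * deriv x₁ t + V 1 * deriv x₂ t) t := by
    intro V t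
    have he : (fun r => dot3 V (rhat x₁ x₂ sbar r))
        = fun r => V 0 * x₁ r + V 1 * x₂ r + V 2 * sbar := by
      funext r; simp [dot3, rhat]
    rw [he]
    exact (((hdx₁ t).hasDerivAt.const_mul (V 0)).add
      ((hdx₂ t).hasDerivAt.const_mul (V 1))).add_const (V 2 * sbar)
  intro s z
  -- s-derivative of the ansatz
  have hDs : ∀ t ζ : ℝ, HasDerivAt (fun r => ebtAnsatz x₁ x₂ sbar A K w r ζ)
      ((-(K * ζ * deriv x₂ t)) • e1 + (K * ζ * deriv x₁ t) • e2
        + (ζ * (A 0 * deriv x₁ t + A 1 * deriv x₂ t)) • e3 + deriv w t) t := by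
    intro t ζ
    have ha : HasDerivAt (fun r => -(ζ ^ 2 / 2 * A 0 + K * ζ * x₂ r)) (-(K * ζ * deriv x₂ t)) t :=
      (((hdx₂ t).hasDerivAt.const_mul (K * ζ)).const_add (ζ ^ 2 / 2 * A 0)).neg
    have hb : HasDerivAt (fun r => -(ζ ^ 2 / 2 * A 1 - K * ζ * x₁ r)) (K * ζ * deriv x₁ t) t := by
      have h := (((hdx₁ t).hasDerivAt.const_mul (K * ζ)).const_sub (ζ ^ 2 / 2 * A 1)).neg
      exact h.congr_deriv (by ring)
    have hc : HasDerivAt (fun r => ζ * dot3 A (rhat x₁ x₂ sbar r))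
        (ζ * (A 0 * deriv x₁ t + A 1 * deriv x₂ t)) t := (hAr A t).const_mul ζ
    have h := (((ha.smul_const e1).add (hb.smul_const e2)).add (hc.smul_const e3)).add
      (hdw t).hasDerivAt
    simp only [ebtAnsatz]
    exact h
  -- z-derivative of the ansatz
  have hDz : ∀ t ζ : ℝ, HasDerivAt (fun r => ebtAnsatz x₁ x₂ sbar A K w t r)
      ((-(ζ * A 0 + K * x₂ t)) • e1 + (-(ζ * A 1 - K * x₁ t)) • e2
        + (dot3 A (rhat x₁ x₂ sbar t)) • e3) ζ := by
    intro t ζ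
    have ha : HasDerivAt (fun r : ℝ => -(r ^ 2 / 2 * A 0 + K * r * x₂ t))
        (-(ζ * A 0 + K * x₂ t)) ζ := by
      have h := ((((hasDerivAt_pow 2 ζ).div_const 2).mul_const (A 0)).add
        (((hasDerivAt_id ζ).const_mul K).mul_const (x₂ t))).neg
      exact h.congr_deriv (by ring)
    have hb : HasDerivAt (fun r : ℝ => -(r ^ 2 / 2 * A 1 - K * r * x₁ t))
        (-(ζ * A 1 - K * x₁ t)) ζ := by
      have h := ((((hasDerivAt_pow 2 ζ).div_const 2).mul_const (A 1)).sub
        (((hasDerivAt_id ζ).const_mul K).mul_const (x₁ t))).neg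
      exact h.congr_deriv (by ring)
    have hc : HasDerivAt (fun r : ℝ => r * dot3 A (rhat x₁ x₂ sbar t))
        (dot3 A (rhat x₁ x₂ sbar t)) ζ := by
      have h := (hasDerivAt_id ζ).mul_const (dot3 A (rhat x₁ x₂ sbar t))
      exact h.congr_deriv (by ring)
    have h := ((((ha.smul_const e1).add (hb.smul_const e2)).add (hc.smul_const e3)).add_const
      (w t))
    simp only [ebtAnsatz]
    exact h
  -- first partial derivatives
  have hpds : ∀ t : ℝ, pds (ebtAnsatz x₁ x₂ sbar A K w) t z
      = (-(K * z * deriv x₂ t)) • e1 + (K * z * deriv x₁ t) • e2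
        + (z * (A 0 * deriv x₁ t + A 1 * deriv x₂ t)) • e3 + deriv w t := by
    intro t; simp only [pds]; exact (hDs t z).deriv
  have hpdz : ∀ t ζ : ℝ, pdz (ebtAnsatz x₁ x₂ sbar A K w) t ζ
      = (-(ζ * A 0 + K * x₂ t)) • e1 + (-(ζ * A 1 - K * x₁ t)) • e2
        + (dot3 A (rhat x₁ x₂ sbar t)) • e3 := by
    intro t ζ; simp only [pdz]; exact (hDz t ζ).deriv
  -- second partial derivatives
  have hwc' : ∀ (t : ℝ), HasDerivAt (deriv w) (deriv (deriv w) t) t :=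
    fun t => (hdw' t).hasDerivAt
  have hpds2 : pds (pds (ebtAnsatz x₁ x₂ sbar A K w)) s z
      = (-(K * z * deriv (deriv x₂) s)) • e1 + (K * z * deriv (deriv x₁) s) • e2
        + (z * (A 0 * deriv (deriv x₁) s + A 1 * deriv (deriv x₂) s)) • e3
        + deriv (deriv w) s := by
    have hQ : (fun t => pds (ebtAnsatz x₁ x₂ sbar A K w) t z)
        = fun t => (-(K * z * deriv x₂ t)) • e1 + (K * z * deriv x₁ t) • e2
          + (z * (A 0 * deriv x₁ t + A 1 * deriv x₂ t)) • e3 + deriv w t :=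
      funext fun t => hpds t
    have ha : HasDerivAt (fun t => -(K * z * deriv x₂ t)) (-(K * z * deriv (deriv x₂) s)) s :=
      ((hdx₂' s).hasDerivAt.const_mul (K * z)).neg
    have hb : HasDerivAt (fun t => K * z * deriv x₁ t) (K * z * deriv (deriv x₁) s) s :=
      (hdx₁' s).hasDerivAt.const_mul (K * z)
    have hc : HasDerivAt (fun t => z * (A 0 * deriv x₁ t + A 1 * deriv x₂ t))
        (z * (A 0 * deriv (deriv x₁) s + A 1 * deriv (deriv x₂) s)) s :=
      (((hdx₁' s).hasDerivAt.const_mul (A 0)).add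
        ((hdx₂' s).hasDerivAt.const_mul (A 1))).const_mul z
    have h := (((ha.smul_const e1).add (hb.smul_const e2)).add (hc.smul_const e3)).add (hwc' s)
    rw [pds, hQ]
    exact h.deriv
  have hpdsz : pds (pdz (ebtAnsatz x₁ x₂ sbar A K w)) s z
      = (-(K * deriv x₂ s)) • e1 + (K * deriv x₁ s) • e2
        + (A 0 * deriv x₁ s + A 1 * deriv x₂ s) • e3 := by
    have hP : (fun t => pdz (ebtAnsatz x₁ x₂ sbar A K w) t z)
        = fun t => (-(z * A 0 + K * x₂ t)) • e1 + (-(z * A 1 - K * x₁ t)) • e2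
          + (dot3 A (rhat x₁ x₂ sbar t)) • e3 := funext fun t => hpdz t z
    have ha : HasDerivAt (fun t => -(z * A 0 + K * x₂ t)) (-(K * deriv x₂ s)) s :=
      (((hdx₂ s).hasDerivAt.const_mul K).const_add (z * A 0)).neg
    have hb : HasDerivAt (fun t => -(z * A 1 - K * x₁ t)) (K * deriv x₁ s) s := by
      have h := (((hdx₁ s).hasDerivAt.const_mul K).const_sub (z * A 1)).neg
      exact h.congr_deriv (by ring)
    have h := ((ha.smul_const e1).add (hb.smul_const e2)).add ((hAr A s).smul_const e3)
    rw [pds, hP]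
    exact h.deriv
  have hpdzz : pdz (pdz (ebtAnsatz x₁ x₂ sbar A K w)) s z
      = (-(A 0)) • e1 + (-(A 1)) • e2 + (0 : ℝ) • e3 := by
    have hP : (fun ζ => pdz (ebtAnsatz x₁ x₂ sbar A K w) s ζ)
        = fun ζ => (-(ζ * A 0 + K * x₂ s)) • e1 + (-(ζ * A 1 - K * x₁ s)) • e2
          + (dot3 A (rhat x₁ x₂ sbar s)) • e3 := funext fun ζ => hpdz s ζ
    have ha : HasDerivAt (fun ζ : ℝ => -(ζ * A 0 + K * x₂ s)) (-(A 0)) z := by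
      have h := (((hasDerivAt_id z).mul_const (A 0)).add_const (K * x₂ s)).neg
      exact h.congr_deriv (by ring)
    have hb : HasDerivAt (fun ζ : ℝ => -(ζ * A 1 - K * x₁ s)) (-(A 1)) z := by
      have h := (((hasDerivAt_id z).mul_const (A 1)).sub_const (K * x₁ s)).neg
      exact h.congr_deriv (by ring)
    have hc : HasDerivAt (fun _ : ℝ => dot3 A (rhat x₁ x₂ sbar s)) (0 : ℝ) z :=
      hasDerivAt_const z _
    have h := ((ha.smul_const e1).add (hb.smul_const e2)).add (hc.smul_const e3)
    rw [pdz, hP]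
    exact h.deriv
  -- derivative of w₃ via the torsion function
  have hg : Continuous fun t => x₁ t * deriv x₂ t - x₂ t * deriv x₁ t :=
    (hx₁.continuous.mul hx₂'.continuous).sub (hx₂.continuous.mul hx₁'.continuous)
  have hws2 : deriv w s 2 = K * (2 * area2 x₁ x₂ sbar / sbar
      - (x₁ s * deriv x₂ s - x₂ s * deriv x₁ s)) := by
    have hint : HasDerivAt (fun t => ∫ σ in (0:ℝ)..t,
          (x₁ σ * deriv x₂ σ - x₂ σ * deriv x₁ σ))
        (x₁ s * deriv x₂ s - x₂ s * deriv x₁ s) s :=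
      intervalIntegral.integral_hasDerivAt_right (hg.intervalIntegrable 0 s)
        hg.aestronglyMeasurable.stronglyMeasurableAtFilter hg.continuousAt
    have htors : HasDerivAt (fun t => tors x₁ x₂ sbar t)
        (2 * area2 x₁ x₂ sbar / sbar - (x₁ s * deriv x₂ s - x₂ s * deriv x₁ s)) s := by
      have h := ((hasDerivAt_id s).const_mul (2 * area2 x₁ x₂ sbar / sbar)).sub hint
      simp only [tors]
      exact h.congr_deriv (by ring)
    have h2 : (fun r => w r 2) = fun r => K * tors x₁ x₂ sbar r := funext fun r => hw3 r
    have h3 := (hwc 2 s).deriv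
    rw [h2] at h3
    rw [← h3, (htors.const_mul K).deriv]
  -- strain values
  have hεss : epsSS x₁ x₂ (ebtAnsatz x₁ x₂ sbar A K w) s z
      = dot3 (deriv w s) (tau x₁ x₂ s) := by
    simp only [epsSS]
    rw [hpds s]
    simp only [dot3, tau, e1, e2, e3, Pi.add_apply, Pi.smul_apply, smul_eq_mul,
      Matrix.cons_val_zero, Matrix.cons_val_one, Matrix.head_cons,
      Matrix.cons_val_two, Matrix.tail_cons]
    ring
  have hεzz : epsZZ (ebtAnsatz x₁ x₂ sbar A K w) s z = dot3 A (rhat x₁ x₂ sbar s) := by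
    simp only [epsZZ]
    rw [hpdz s z]
    simp only [dot3, e1, e2, e3, Pi.add_apply, Pi.smul_apply, smul_eq_mul,
      Matrix.cons_val_zero, Matrix.cons_val_one, Matrix.head_cons,
      Matrix.cons_val_two, Matrix.tail_cons]
    ring
  have hεsz : epsSZ x₁ x₂ (ebtAnsatz x₁ x₂ sbar A K w) s z
      = K * area2 x₁ x₂ sbar / sbar := by
    simp only [epsSZ]
    rw [hpds s, hpdz s z]
    simp only [dot3, tau, e1, e2, e3, rhat, Pi.add_apply, Pi.smul_apply, smul_eq_mul,
      Matrix.cons_val_zero, Matrix.cons_val_one, Matrix.head_cons,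
      Matrix.cons_val_two, Matrix.tail_cons]
    rw [hws2]
    ring
  have hρss : rhoSS x₁ x₂ (ebtAnsatz x₁ x₂ sbar A K w) s z
      = dot3 (deriv (deriv w) s) (nrm x₁ x₂ s) := by
    simp only [rhoSS]
    rw [hpds2]
    simp only [dot3, nrm, e1, e2, e3, Pi.add_apply, Pi.smul_apply, smul_eq_mul,
      Matrix.cons_val_zero, Matrix.cons_val_one, Matrix.head_cons,
      Matrix.cons_val_two, Matrix.tail_cons]
    linear_combination (-(K * z)) * harc' s
  have hρsz : rhoSZ x₁ x₂ (ebtAnsatz x₁ x₂ sbar A K w) s z = -K := by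
    simp only [rhoSZ]
    rw [hpdsz]
    simp only [dot3, nrm, e1, e2, e3, Pi.add_apply, Pi.smul_apply, smul_eq_mul,
      Matrix.cons_val_zero, Matrix.cons_val_one, Matrix.head_cons,
      Matrix.cons_val_two, Matrix.tail_cons]
    linear_combination (-K) * harc s
  have hρzz : rhoZZ x₁ x₂ (ebtAnsatz x₁ x₂ sbar A K w) s z
      = -(A 0 * nrm x₁ x₂ s 0 + A 1 * nrm x₁ x₂ s 1) := by
    simp only [rhoZZ]
    rw [hpdzz]
    simp only [dot3, nrm, e1, e2, e3, Pi.add_apply, Pi.smul_apply, smul_eq_mul,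
      Matrix.cons_val_zero, Matrix.cons_val_one, Matrix.head_cons,
      Matrix.cons_val_two, Matrix.tail_cons]
    ring
  have h1 := hw1 s
  have h2 := hw2 s
  refine ⟨?_, ?_, ?_, ?_, ?_, ?_⟩
  · simp only [Nss]
    rw [hεss, hεzz, h1]
    field_simp
    ring
  · simp only [Nsz]
    rw [hεsz]
    ring
  · simp only [Nzz]
    rw [hεss, hεzz, h1]
    field_simp
    ring
  · simp only [Mss]
    rw [hρss, hρzz, h2]
    field_simp
    ring
  · simp only [Msz]
    rw [hρsz]
    ring
  · simp only [Mzz]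
    rw [hρss, hρzz, h2]
    field_simp
    ring
end
end

section
/- (Twist–torque relation, eq. (27).) Under the hypotheses of the previous statement (i.e. u is the extension–bending–torsion ansatz with w satisfying w' · τ = −ν(A · r̂) − (1/C)[B₁n₁ + B₂n₂ + κ(B · r̂)], w'' · n = ν(A₁n₁ + A₂n₂) − (1/D)(B · r̂), and w₃ = Kφ), the axial component of the resultant moment satisfies ℳ₃(u) = −2(1 − ν)(C𝒜²/s̄ + Ds̄)K. Consequently, if 2(1 − ν)(C𝒜²/s̄ + Ds̄) ≠ 0, the end-edge condition ℳ₃(u) = ℳ₃⁰ holds if and only if K = −ℳ₃⁰ / [2(1 − ν)(C𝒜²/s̄ + Ds̄)]. -/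
open Real MeasureTheory intervalIntegral

noncomputable section

/-- eq. (27), twist–torque relation: for the extension–bending–torsion solution,
ℳ₃(u) = −2(1 − ν)(C𝒜²/s̄ + Ds̄)K; hence if the torsional rigidity is nonzero,
ℳ₃(u) = ℳ₃⁰ iff K = −ℳ₃⁰ / [2(1 − ν)(C𝒜²/s̄ + Ds̄)]. -/
theorem twist_torque_relation
    (C D ν sbar : ℝ) (hC : 0 < C) (hD : 0 < D) (hsbar : 0 < sbar)
    (x₁ x₂ : ℝ → ℝ)
    (hx₁ : ContDiff ℝ (⊤ : ℕ∞) x₁) (hx₂ : ContDiff ℝ (⊤ : ℕ∞) x₂)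
    (hper₁ : ∀ s, x₁ (s + sbar) = x₁ s) (hper₂ : ∀ s, x₂ (s + sbar) = x₂ s)
    (harc : ∀ s, deriv x₁ s ^ 2 + deriv x₂ s ^ 2 = 1)
    (A B : Fin 3 → ℝ) (K : ℝ) (w : ℝ → Fin 3 → ℝ) (hw : ContDiff ℝ (⊤ : ℕ∞) w)
    (hw1 : ∀ s, dot3 (deriv w s) (tau x₁ x₂ s)
      = -(ν * dot3 A (rhat x₁ x₂ sbar s))
        - (1 / C) * (B 0 * nrm x₁ x₂ s 0 + B 1 * nrm x₁ x₂ s 1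
            + kap x₁ x₂ s * dot3 B (rhat x₁ x₂ sbar s)))
    (hw2 : ∀ s, dot3 (deriv (deriv w) s) (nrm x₁ x₂ s)
      = ν * (A 0 * nrm x₁ x₂ s 0 + A 1 * nrm x₁ x₂ s 1)
        - (1 / D) * dot3 B (rhat x₁ x₂ sbar s))
    (hw3 : ∀ s, w s 2 = K * tors x₁ x₂ sbar s)
    (M30 : ℝ) :
    Mres C D ν x₁ x₂ sbar (ebtAnsatz x₁ x₂ sbar A K w) 2
      = -(2 * (1 - ν) * (C * area2 x₁ x₂ sbar ^ 2 / sbar + D * sbar)) * K ∧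
    (2 * (1 - ν) * (C * area2 x₁ x₂ sbar ^ 2 / sbar + D * sbar) ≠ 0 →
      (Mres C D ν x₁ x₂ sbar (ebtAnsatz x₁ x₂ sbar A K w) 2 = M30 ↔
        K = -M30 / (2 * (1 - ν) * (C * area2 x₁ x₂ sbar ^ 2 / sbar + D * sbar)))) := by

  have hsne : sbar ≠ 0 := ne_of_gt hsbar
  -- smoothness bookkeeping
  have hx₁i : ContDiff ℝ ((⊤ : ℕ∞) : WithTop ℕ∞) x₁ := hx₁.of_le (by simp)
  have hx₂i : ContDiff ℝ ((⊤ : ℕ∞) : WithTop ℕ∞) x₂ := hx₂.of_le (by simp)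
  have hwi : ContDiff ℝ ((⊤ : ℕ∞) : WithTop ℕ∞) w := hw.of_le (by simp)
  have hdx₁ : Differentiable ℝ x₁ := hx₁i.differentiable (by simp)
  have hdx₂ : Differentiable ℝ x₂ := hx₂i.differentiable (by simp)
  have hdw : Differentiable ℝ w := hwi.differentiable (by simp)
  have hx₁' : ContDiff ℝ ((⊤ : ℕ∞) : WithTop ℕ∞) (deriv x₁) := (contDiff_infty_iff_deriv.mp hx₁i).2
  have hx₂' : ContDiff ℝ ((⊤ : ℕ∞) : WithTop ℕ∞) (deriv x₂) := (contDiff_infty_iff_deriv.mp hx₂i).2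
  have hw' : ContDiff ℝ ((⊤ : ℕ∞) : WithTop ℕ∞) (deriv w) := (contDiff_infty_iff_deriv.mp hwi).2
  have hdx₁' : Differentiable ℝ (deriv x₁) := hx₁'.differentiable (by simp)
  have hdx₂' : Differentiable ℝ (deriv x₂) := hx₂'.differentiable (by simp)
  have hdw' : Differentiable ℝ (deriv w) := hw'.differentiable (by simp)
  have hcx₁ : Continuous x₁ := hx₁i.continuous
  have hcx₂ : Continuous x₂ := hx₂i.continuous
  have hcp : Continuous (deriv x₁) := hx₁'.continuous
  have hcq : Continuous (deriv x₂) := hx₂'.continuous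
  have hcpp : Continuous (deriv (deriv x₁)) := (contDiff_infty_iff_deriv.mp hx₁').2.continuous
  have hcqq : Continuous (deriv (deriv x₂)) := (contDiff_infty_iff_deriv.mp hx₂').2.continuous
  set u := ebtAnsatz x₁ x₂ sbar A K w with hu_def
  -- componentwise formula for u
  have hu : ∀ s z, u s z = ![-(z ^ 2 / 2 * A 0 + K * z * x₂ s) + w s 0,
      -(z ^ 2 / 2 * A 1 - K * z * x₁ s) + w s 1,
      z * (A 0 * x₁ s + A 1 * x₂ s + A 2 * sbar) + w s 2] := by
    intro s z
    funext i
    fin_cases i <;>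
      simp [hu_def, ebtAnsatz, e1, e2, e3, dot3, rhat] <;> ring
  -- first partial derivatives
  have hpdz : ∀ s z, pdz u s z = ![-(z * A 0 + K * x₂ s), -(z * A 1 - K * x₁ s),
      A 0 * x₁ s + A 1 * x₂ s + A 2 * sbar] := by
    intro s z
    have hF : (fun t => u s t) = fun t => ![-(t ^ 2 / 2 * A 0 + K * t * x₂ s) + w s 0,
        -(t ^ 2 / 2 * A 1 - K * t * x₁ s) + w s 1,
        t * (A 0 * x₁ s + A 1 * x₂ s + A 2 * sbar) + w s 2] := funext fun t => hu s t
    have hd : HasDerivAt (fun t => u s t) (![-(z * A 0 + K * x₂ s), -(z * A 1 - K * x₁ s),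
        A 0 * x₁ s + A 1 * x₂ s + A 2 * sbar]) z := by
      rw [hF]
      refine hasDerivAt_pi.mpr fun i => ?_
      fin_cases i <;> simp only [Matrix.cons_val_zero, Matrix.cons_val_one, Matrix.head_cons,
        Matrix.cons_val_two, Matrix.tail_cons, Fin.isValue]
      · have h1 : HasDerivAt (fun t : ℝ => t ^ 2 / 2 * A 0) (z * A 0) z := by
          have := ((hasDerivAt_pow 2 z).div_const 2).mul_const (A 0)
          exact this.congr_deriv (by push_cast; ring)
        have h2 : HasDerivAt (fun t : ℝ => K * t * x₂ s) (K * x₂ s) z := by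
          have := ((hasDerivAt_id z).const_mul K).mul_const (x₂ s)
          exact this.congr_deriv (by ring)
        exact ((h1.add h2).neg).add_const (w s 0)
      · have h1 : HasDerivAt (fun t : ℝ => t ^ 2 / 2 * A 1) (z * A 1) z := by
          have := ((hasDerivAt_pow 2 z).div_const 2).mul_const (A 1)
          exact this.congr_deriv (by push_cast; ring)
        have h2 : HasDerivAt (fun t : ℝ => K * t * x₁ s) (K * x₁ s) z := by
          have := ((hasDerivAt_id z).const_mul K).mul_const (x₁ s)
          exact this.congr_deriv (by ring)
        exact ((h1.sub h2).neg).add_const (w s 1)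
      · have h1 : HasDerivAt (fun t : ℝ => t * (A 0 * x₁ s + A 1 * x₂ s + A 2 * sbar))
            (A 0 * x₁ s + A 1 * x₂ s + A 2 * sbar) z := by
          have := (hasDerivAt_id z).mul_const (A 0 * x₁ s + A 1 * x₂ s + A 2 * sbar)
          exact this.congr_deriv (by ring)
        exact h1.add_const (w s 2)
    simpa [pdz] using hd.deriv
  have hpds : ∀ s z, pds u s z = ![-(K * z * deriv x₂ s) + deriv w s 0,
      K * z * deriv x₁ s + deriv w s 1,
      z * (A 0 * deriv x₁ s + A 1 * deriv x₂ s) + deriv w s 2] := by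
    intro s z
    have hF : (fun t => u t z) = fun t => ![-(z ^ 2 / 2 * A 0 + K * z * x₂ t) + w t 0,
        -(z ^ 2 / 2 * A 1 - K * z * x₁ t) + w t 1,
        z * (A 0 * x₁ t + A 1 * x₂ t + A 2 * sbar) + w t 2] := funext fun t => hu t z
    have hd : HasDerivAt (fun t => u t z) (![-(K * z * deriv x₂ s) + deriv w s 0,
        K * z * deriv x₁ s + deriv w s 1,
        z * (A 0 * deriv x₁ s + A 1 * deriv x₂ s) + deriv w s 2]) s := by
      rw [hF]
      refine hasDerivAt_pi.mpr fun i => ?_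
      have hw0 : HasDerivAt (fun t => w t 0) (deriv w s 0) s :=
        hasDerivAt_pi.mp (hdw s).hasDerivAt 0
      have hw1' : HasDerivAt (fun t => w t 1) (deriv w s 1) s :=
        hasDerivAt_pi.mp (hdw s).hasDerivAt 1
      have hw2' : HasDerivAt (fun t => w t 2) (deriv w s 2) s :=
        hasDerivAt_pi.mp (hdw s).hasDerivAt 2
      fin_cases i <;> simp only [Matrix.cons_val_zero, Matrix.cons_val_one, Matrix.head_cons,
        Matrix.cons_val_two, Matrix.tail_cons, Fin.isValue]
      · have h1 : HasDerivAt (fun t : ℝ => -(z ^ 2 / 2 * A 0 + K * z * x₂ t))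
            (-(K * z * deriv x₂ s)) s := by
          have := (((hdx₂ s).hasDerivAt.const_mul (K * z)).const_add (z ^ 2 / 2 * A 0)).neg
          exact this.congr_deriv (by ring)
        exact h1.add hw0
      · have h1 : HasDerivAt (fun t : ℝ => -(z ^ 2 / 2 * A 1 - K * z * x₁ t))
            (K * z * deriv x₁ s) s := by
          have := (((hdx₁ s).hasDerivAt.const_mul (K * z)).const_sub (z ^ 2 / 2 * A 1)).neg
          exact this.congr_deriv (by ring)
        exact h1.add hw1'
      · have h1 : HasDerivAt (fun t : ℝ => z * (A 0 * x₁ t + A 1 * x₂ t + A 2 * sbar))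
            (z * (A 0 * deriv x₁ s + A 1 * deriv x₂ s)) s := by
          have := ((((hdx₁ s).hasDerivAt.const_mul (A 0)).add
            ((hdx₂ s).hasDerivAt.const_mul (A 1))).add_const (A 2 * sbar)).const_mul z
          exact this.congr_deriv (by ring)
        exact h1.add hw2'
    simpa [pds] using hd.deriv
  -- second partial derivatives
  have hpdzz : ∀ s z, pdz (pdz u) s z = ![-(A 0), -(A 1), 0] := by
    intro s z
    have hF : (fun t => pdz u s t) = fun t => ![-(t * A 0 + K * x₂ s), -(t * A 1 - K * x₁ s),
        A 0 * x₁ s + A 1 * x₂ s + A 2 * sbar] := funext fun t => hpdz s t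
    have hd : HasDerivAt (fun t => pdz u s t) (![-(A 0), -(A 1), 0]) z := by
      rw [hF]
      refine hasDerivAt_pi.mpr fun i => ?_
      fin_cases i <;> simp only [Matrix.cons_val_zero, Matrix.cons_val_one, Matrix.head_cons,
        Matrix.cons_val_two, Matrix.tail_cons, Fin.isValue]
      · have h1 : HasDerivAt (fun t : ℝ => t * A 0 + K * x₂ s) (A 0) z := by
          have := ((hasDerivAt_id z).mul_const (A 0)).add_const (K * x₂ s)
          exact this.congr_deriv (by ring)
        exact h1.neg
      · have h1 : HasDerivAt (fun t : ℝ => t * A 1 - K * x₁ s) (A 1) z := by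
          have := ((hasDerivAt_id z).mul_const (A 1)).sub_const (K * x₁ s)
          exact this.congr_deriv (by ring)
        exact h1.neg
      · exact hasDerivAt_const z _
    simpa [pdz] using hd.deriv
  have hpdsz : ∀ s z, pds (pdz u) s z = ![-(K * deriv x₂ s), K * deriv x₁ s,
      A 0 * deriv x₁ s + A 1 * deriv x₂ s] := by
    intro s z
    have hF : (fun t => pdz u t z) = fun t => ![-(z * A 0 + K * x₂ t), -(z * A 1 - K * x₁ t),
        A 0 * x₁ t + A 1 * x₂ t + A 2 * sbar] := funext fun t => hpdz t z
    have hd : HasDerivAt (fun t => pdz u t z) (![-(K * deriv x₂ s), K * deriv x₁ s,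
        A 0 * deriv x₁ s + A 1 * deriv x₂ s]) s := by
      rw [hF]
      refine hasDerivAt_pi.mpr fun i => ?_
      fin_cases i <;> simp only [Matrix.cons_val_zero, Matrix.cons_val_one, Matrix.head_cons,
        Matrix.cons_val_two, Matrix.tail_cons, Fin.isValue]
      · have h1 : HasDerivAt (fun t : ℝ => -(z * A 0 + K * x₂ t)) (-(K * deriv x₂ s)) s := by
          have := (((hdx₂ s).hasDerivAt.const_mul K).const_add (z * A 0)).neg
          exact this.congr_deriv (by ring)
        exact h1
      · have h1 : HasDerivAt (fun t : ℝ => -(z * A 1 - K * x₁ t)) (K * deriv x₁ s) s := by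
          have := (((hdx₁ s).hasDerivAt.const_mul K).const_sub (z * A 1)).neg
          exact this.congr_deriv (by ring)
        exact h1
      · have h1 : HasDerivAt (fun t : ℝ => A 0 * x₁ t + A 1 * x₂ t + A 2 * sbar)
            (A 0 * deriv x₁ s + A 1 * deriv x₂ s) s := by
          have := (((hdx₁ s).hasDerivAt.const_mul (A 0)).add
            ((hdx₂ s).hasDerivAt.const_mul (A 1))).add_const (A 2 * sbar)
          exact this.congr_deriv (by ring)
        exact h1
    simpa [pds] using hd.deriv
  have hpdss : ∀ s z, pds (pds u) s z = ![-(K * z * deriv (deriv x₂) s) + deriv (deriv w) s 0,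
      K * z * deriv (deriv x₁) s + deriv (deriv w) s 1,
      z * (A 0 * deriv (deriv x₁) s + A 1 * deriv (deriv x₂) s) + deriv (deriv w) s 2] := by
    intro s z
    have hF : (fun t => pds u t z) = fun t => ![-(K * z * deriv x₂ t) + deriv w t 0,
        K * z * deriv x₁ t + deriv w t 1,
        z * (A 0 * deriv x₁ t + A 1 * deriv x₂ t) + deriv w t 2] := funext fun t => hpds t z
    have hd : HasDerivAt (fun t => pds u t z)
        (![-(K * z * deriv (deriv x₂) s) + deriv (deriv w) s 0,
          K * z * deriv (deriv x₁) s + deriv (deriv w) s 1,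
          z * (A 0 * deriv (deriv x₁) s + A 1 * deriv (deriv x₂) s) + deriv (deriv w) s 2]) s := by
      rw [hF]
      refine hasDerivAt_pi.mpr fun i => ?_
      have hw0 : HasDerivAt (fun t => deriv w t 0) (deriv (deriv w) s 0) s :=
        hasDerivAt_pi.mp (hdw' s).hasDerivAt 0
      have hw1'' : HasDerivAt (fun t => deriv w t 1) (deriv (deriv w) s 1) s :=
        hasDerivAt_pi.mp (hdw' s).hasDerivAt 1
      have hw2'' : HasDerivAt (fun t => deriv w t 2) (deriv (deriv w) s 2) s :=
        hasDerivAt_pi.mp (hdw' s).hasDerivAt 2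
      fin_cases i <;> simp only [Matrix.cons_val_zero, Matrix.cons_val_one, Matrix.head_cons,
        Matrix.cons_val_two, Matrix.tail_cons, Fin.isValue]
      · have h1 : HasDerivAt (fun t : ℝ => -(K * z * deriv x₂ t))
            (-(K * z * deriv (deriv x₂) s)) s := by
          have := ((hdx₂' s).hasDerivAt.const_mul (K * z)).neg
          exact this.congr_deriv (by ring)
        exact h1.add hw0
      · have h1 : HasDerivAt (fun t : ℝ => K * z * deriv x₁ t)
            (K * z * deriv (deriv x₁) s) s := (hdx₁' s).hasDerivAt.const_mul (K * z)
        exact h1.add hw1''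
      · have h1 : HasDerivAt (fun t : ℝ => z * (A 0 * deriv x₁ t + A 1 * deriv x₂ t))
            (z * (A 0 * deriv (deriv x₁) s + A 1 * deriv (deriv x₂) s)) s :=
          (((hdx₁' s).hasDerivAt.const_mul (A 0)).add
            ((hdx₂' s).hasDerivAt.const_mul (A 1))).const_mul z
        exact h1.add hw2''
    simpa [pds] using hd.deriv
  -- arc-length consequence: p p' + q q' = 0
  have harc' : ∀ s, deriv x₁ s * deriv (deriv x₁) s + deriv x₂ s * deriv (deriv x₂) s = 0 := by
    intro s
    have hF : (fun t => deriv x₁ t ^ 2 + deriv x₂ t ^ 2) = fun _ => (1 : ℝ) :=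
      funext fun t => harc t
    have hd : HasDerivAt (fun t => deriv x₁ t ^ 2 + deriv x₂ t ^ 2)
        (2 * deriv x₁ s * deriv (deriv x₁) s + 2 * deriv x₂ s * deriv (deriv x₂) s) s := by
      have h1 := ((hdx₁' s).hasDerivAt.pow 2)
      have h2 := ((hdx₂' s).hasDerivAt.pow 2)
      have := h1.add h2
      exact this.congr_deriv (by push_cast; ring)
    have h0 : deriv (fun t => deriv x₁ t ^ 2 + deriv x₂ t ^ 2) s = 0 := by
      rw [hF]; simp
    have := hd.deriv
    rw [h0] at this
    linarith
  -- bending strains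
  have hrho_sz : ∀ s z, rhoSZ x₁ x₂ u s z = -K := by
    intro s z
    rw [rhoSZ, hpdsz]
    simp only [dot3, nrm, Matrix.cons_val_zero, Matrix.cons_val_one, Matrix.head_cons,
      Matrix.cons_val_two, Matrix.tail_cons]
    linear_combination (-K) * harc s
  have hrho_zz : ∀ s z, rhoZZ x₁ x₂ u s z = -(A 0 * deriv x₂ s) + A 1 * deriv x₁ s := by
    intro s z
    rw [rhoZZ, hpdzz]
    simp only [dot3, nrm, Matrix.cons_val_zero, Matrix.cons_val_one, Matrix.head_cons,
      Matrix.cons_val_two, Matrix.tail_cons]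
    ring
  have hrho_ss : ∀ s z, rhoSS x₁ x₂ u s z = dot3 (deriv (deriv w) s) (nrm x₁ x₂ s) := by
    intro s z
    rw [rhoSS, hpdss]
    simp only [dot3, nrm, Matrix.cons_val_zero, Matrix.cons_val_one, Matrix.head_cons,
      Matrix.cons_val_two, Matrix.tail_cons]
    linear_combination (-(K * z)) * harc' s
  -- couple stresses
  have hMsz : ∀ s z, Msz D ν x₁ x₂ u s z = -(D * (1 - ν) * K) := by
    intro s z; rw [Msz, hrho_sz]; ring
  have hMzz : ∀ s z, Mzz D ν x₁ x₂ u s z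
      = D * (ν * (ν * (A 0 * deriv x₂ s + A 1 * -deriv x₁ s)
          - 1 / D * (B 0 * x₁ s + B 1 * x₂ s + B 2 * sbar))
        + (-(A 0 * deriv x₂ s) + A 1 * deriv x₁ s)) := by
    intro s z
    rw [Mzz, hrho_ss, hrho_zz, hw2 s]
    simp only [dot3, nrm, rhat, Matrix.cons_val_zero, Matrix.cons_val_one, Matrix.head_cons,
      Matrix.cons_val_two, Matrix.tail_cons]
  -- transverse shear vanishes
  have hSzf : ∀ s, Szf D ν x₁ x₂ u s 0 = 0 := by
    intro s
    have h1 : (fun t => Msz D ν x₁ x₂ u t 0) = fun _ => -(D * (1 - ν) * K) :=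
      funext fun t => hMsz t 0
    have h2 : (fun t => Mzz D ν x₁ x₂ u s t)
        = fun _ => D * (ν * (ν * (A 0 * deriv x₂ s + A 1 * -deriv x₁ s)
          - 1 / D * (B 0 * x₁ s + B 1 * x₂ s + B 2 * sbar))
        + (-(A 0 * deriv x₂ s) + A 1 * deriv x₁ s)) := funext fun t => hMzz s t
    rw [Szf, sds, sdz, h1, h2, deriv_const, deriv_const]
    ring
  -- membrane strains at z = 0
  have hEzz : ∀ s, epsZZ u s 0 = A 0 * x₁ s + A 1 * x₂ s + A 2 * sbar := by
    intro s
    rw [epsZZ, hpdz]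
    simp [dot3, e3]
  have hEss : ∀ s, epsSS x₁ x₂ u s 0 = dot3 (deriv w s) (tau x₁ x₂ s) := by
    intro s
    rw [epsSS, hpds]
    simp only [dot3, tau, Matrix.cons_val_zero, Matrix.cons_val_one, Matrix.head_cons,
      Matrix.cons_val_two, Matrix.tail_cons]
    ring
  -- axial component of w and its derivative
  have hcg : Continuous fun t => x₁ t * deriv x₂ t - x₂ t * deriv x₁ t := by fun_prop
  have hdw2 : ∀ s, deriv w s 2
      = K * (2 * area2 x₁ x₂ sbar / sbar - (x₁ s * deriv x₂ s - x₂ s * deriv x₁ s)) := by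
    intro s
    have h1 : HasDerivAt (fun t => w t 2) (deriv w s 2) s :=
      hasDerivAt_pi.mp (hdw s).hasDerivAt 2
    have hF : (fun t => w t 2) = fun t => K * tors x₁ x₂ sbar t := funext fun t => hw3 t
    have hint : HasDerivAt (fun r => ∫ σ in (0:ℝ)..r, (x₁ σ * deriv x₂ σ - x₂ σ * deriv x₁ σ))
        (x₁ s * deriv x₂ s - x₂ s * deriv x₁ s) s :=
      intervalIntegral.integral_hasDerivAt_right (hcg.intervalIntegrable 0 s)
        (hcg.stronglyMeasurableAtFilter _ _) hcg.continuousAt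
    have hlin : HasDerivAt (fun t : ℝ => 2 * area2 x₁ x₂ sbar / sbar * t)
        (2 * area2 x₁ x₂ sbar / sbar) s := by
      simpa using (hasDerivAt_id s).const_mul (2 * area2 x₁ x₂ sbar / sbar)
    have htors : HasDerivAt (fun t => K * tors x₁ x₂ sbar t)
        (K * (2 * area2 x₁ x₂ sbar / sbar - (x₁ s * deriv x₂ s - x₂ s * deriv x₁ s))) s := by
      have := (hlin.sub hint).const_mul K
      simpa [tors] using this
    rw [hF] at h1
    exact h1.unique htors
  -- membrane shear strain at z = 0
  have hEsz : ∀ s, epsSZ x₁ x₂ u s 0 = K * area2 x₁ x₂ sbar / sbar := by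
    intro s
    rw [epsSZ, hpdz, hpds]
    simp only [dot3, tau, e3, Matrix.cons_val_zero, Matrix.cons_val_one, Matrix.head_cons,
      Matrix.cons_val_two, Matrix.tail_cons, mul_zero, zero_mul, add_zero, zero_add]
    rw [hdw2 s]
    field_simp
    ring
  have hPsz0 : ∀ s, Psz C D ν x₁ x₂ u s 0
      = C * (1 - ν) * K * area2 x₁ x₂ sbar / sbar + kap x₁ x₂ s * (D * (1 - ν) * K) := by
    intro s
    rw [Psz, Nsz, hEsz s, hMsz s 0]
    ring
  have hPzz0 : ∀ s, Pzz C ν x₁ x₂ u s 0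
      = C * (ν * (-(ν * (A 0 * x₁ s + A 1 * x₂ s + A 2 * sbar))
          - 1 / C * (B 0 * deriv x₂ s + B 1 * -deriv x₁ s
            + kap x₁ x₂ s * (B 0 * x₁ s + B 1 * x₂ s + B 2 * sbar)))
        + (A 0 * x₁ s + A 1 * x₂ s + A 2 * sbar)) := by
    intro s
    rw [Pzz, Nzz, hEss s, hEzz s, hw1 s]
    simp only [dot3, nrm, rhat, Matrix.cons_val_zero, Matrix.cons_val_one, Matrix.head_cons,
      Matrix.cons_val_two, Matrix.tail_cons]
  -- the integrand of the moment resultant, componentwise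
  set Φ : ℝ → Fin 3 → ℝ := fun s =>
      ![x₂ s * (C * (ν * (-(ν * (A 0 * x₁ s + A 1 * x₂ s + A 2 * sbar))
          - 1 / C * (B 0 * deriv x₂ s + B 1 * -deriv x₁ s
            + kap x₁ x₂ s * (B 0 * x₁ s + B 1 * x₂ s + B 2 * sbar)))
        + (A 0 * x₁ s + A 1 * x₂ s + A 2 * sbar)))
        + (D * (ν * (ν * (A 0 * deriv x₂ s + A 1 * -deriv x₁ s)
          - 1 / D * (B 0 * x₁ s + B 1 * x₂ s + B 2 * sbar))
        + (-(A 0 * deriv x₂ s) + A 1 * deriv x₁ s))) * deriv x₁ s,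
        -(x₁ s * (C * (ν * (-(ν * (A 0 * x₁ s + A 1 * x₂ s + A 2 * sbar))
          - 1 / C * (B 0 * deriv x₂ s + B 1 * -deriv x₁ s
            + kap x₁ x₂ s * (B 0 * x₁ s + B 1 * x₂ s + B 2 * sbar)))
        + (A 0 * x₁ s + A 1 * x₂ s + A 2 * sbar))))
        + (D * (ν * (ν * (A 0 * deriv x₂ s + A 1 * -deriv x₁ s)
          - 1 / D * (B 0 * x₁ s + B 1 * x₂ s + B 2 * sbar))
        + (-(A 0 * deriv x₂ s) + A 1 * deriv x₁ s))) * deriv x₂ s,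
        C * (1 - ν) * K * area2 x₁ x₂ sbar / sbar
            * (x₁ s * deriv x₂ s - x₂ s * deriv x₁ s)
          + D * (1 - ν) * K
            * (kap x₁ x₂ s * (x₁ s * deriv x₂ s - x₂ s * deriv x₁ s))
          + D * (1 - ν) * K] with hΦdef
  have hIg : ∀ s, (cross3 (pos x₁ x₂ s 0)
        (Psz C D ν x₁ x₂ u s 0 • tau x₁ x₂ s + Pzz C ν x₁ x₂ u s 0 • e3
          + Szf D ν x₁ x₂ u s 0 • nrm x₁ x₂ s)
      - Msz D ν x₁ x₂ u s 0 • e3 + Mzz D ν x₁ x₂ u s 0 • tau x₁ x₂ s)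
      = Φ s := by
    intro s
    simp only [hΦdef]
    rw [hPsz0 s, hPzz0 s, hSzf s, hMsz s 0, hMzz s 0]
    funext i
    fin_cases i <;>
      simp [cross3, pos, tau, e3, nrm] <;> ring
  -- continuity of the explicit integrand
  have hΦc : Continuous Φ := by
    rw [hΦdef]
    refine continuous_pi fun i => ?_
    fin_cases i <;>
      simp [kap] <;>
      fun_prop
  -- extracting the axial component of the integral
  have hint2 : (∫ s in (0:ℝ)..sbar, Φ s) 2 = ∫ s in (0:ℝ)..sbar, Φ s 2 := by
    have h := ContinuousLinearMap.intervalIntegral_comp_comm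
      (ContinuousLinearMap.proj (R := ℝ) (φ := fun _ : Fin 3 => ℝ) 2)
      ((hΦc.intervalIntegrable 0 sbar : IntervalIntegrable Φ MeasureTheory.volume 0 sbar))
    simpa using h.symm
  have hMres2 : Mres C D ν x₁ x₂ sbar u 2 = -∫ s in (0:ℝ)..sbar, Φ s 2 := by
    have hM : Mres C D ν x₁ x₂ sbar u = -∫ s in (0:ℝ)..sbar, Φ s := by
      simp only [Mres]
      congr 1
      exact intervalIntegral.integral_congr fun s _ => hIg s
    rw [hM, Pi.neg_apply, hint2]
  -- the pointwise identity κ·(x₁x₂' − x₂x₁') = 1 − d/ds (x₁x₁' + x₂x₂')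
  have hhd : ∀ s, HasDerivAt (fun t => x₁ t * deriv x₁ t + x₂ t * deriv x₂ t)
      (deriv x₁ s * deriv x₁ s + x₁ s * deriv (deriv x₁) s
        + (deriv x₂ s * deriv x₂ s + x₂ s * deriv (deriv x₂) s)) s := fun s =>
    ((hdx₁ s).hasDerivAt.mul (hdx₁' s).hasDerivAt).add
      ((hdx₂ s).hasDerivAt.mul (hdx₂' s).hasDerivAt)
  have hkg : ∀ s, kap x₁ x₂ s * (x₁ s * deriv x₂ s - x₂ s * deriv x₁ s)
      = 1 - deriv (fun t => x₁ t * deriv x₁ t + x₂ t * deriv x₂ t) s := by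
    intro s
    rw [(hhd s).deriv, kap]
    linear_combination (x₁ s * deriv x₁ s + x₂ s * deriv x₂ s) * harc' s
      + (1 - x₁ s * deriv (deriv x₁) s - x₂ s * deriv (deriv x₂) s) * harc s
  have hdercont : Continuous (deriv (fun t => x₁ t * deriv x₁ t + x₂ t * deriv x₂ t)) := by
    have hE : deriv (fun t => x₁ t * deriv x₁ t + x₂ t * deriv x₂ t) = fun s =>
        deriv x₁ s * deriv x₁ s + x₁ s * deriv (deriv x₁) s
          + (deriv x₂ s * deriv x₂ s + x₂ s * deriv (deriv x₂) s) :=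
      funext fun s => (hhd s).deriv
    rw [hE]; fun_prop
  have hFTC : ∫ s in (0:ℝ)..sbar, deriv (fun t => x₁ t * deriv x₁ t + x₂ t * deriv x₂ t) s
      = (x₁ sbar * deriv x₁ sbar + x₂ sbar * deriv x₂ sbar)
        - (x₁ 0 * deriv x₁ 0 + x₂ 0 * deriv x₂ 0) :=
    intervalIntegral.integral_deriv_eq_sub (fun x _ => (hhd x).differentiableAt)
      (hdercont.intervalIntegrable 0 sbar)
  have hper : x₁ sbar * deriv x₁ sbar + x₂ sbar * deriv x₂ sbar
      = x₁ 0 * deriv x₁ 0 + x₂ 0 * deriv x₂ 0 := by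
    have e1' : x₁ sbar = x₁ 0 := by simpa using hper₁ 0
    have e2' : x₂ sbar = x₂ 0 := by simpa using hper₂ 0
    have e3' : deriv x₁ sbar = deriv x₁ 0 := by
      have hfun : (fun r => x₁ (r + sbar)) = x₁ := funext fun r => hper₁ r
      have h := deriv_comp_add_const (f := x₁) (a := sbar) (x := (0 : ℝ))
      rw [hfun] at h
      simpa using h.symm
    have e4' : deriv x₂ sbar = deriv x₂ 0 := by
      have hfun : (fun r => x₂ (r + sbar)) = x₂ := funext fun r => hper₂ r
      have h := deriv_comp_add_const (f := x₂) (a := sbar) (x := (0 : ℝ))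
      rw [hfun] at h
      simpa using h.symm
    rw [e1', e2', e3', e4']
  -- component 2 of the integrand, rewritten for integration
  have hΦ2 : ∀ s, Φ s 2 = C * (1 - ν) * K * area2 x₁ x₂ sbar / sbar
        * (x₁ s * deriv x₂ s - x₂ s * deriv x₁ s)
      + D * (1 - ν) * K
        * (2 - deriv (fun t => x₁ t * deriv x₁ t + x₂ t * deriv x₂ t) s) := by
    intro s
    simp only [hΦdef, Matrix.cons_val_two, Matrix.tail_cons, Matrix.head_cons]
    rw [hkg s]
    ring
  -- value of the scalar integral
  have i1 : IntervalIntegrable (fun s => C * (1 - ν) * K * area2 x₁ x₂ sbar / sbar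
      * (x₁ s * deriv x₂ s - x₂ s * deriv x₁ s)) volume 0 sbar :=
    (continuous_const.mul hcg).intervalIntegrable 0 sbar
  have i2 : IntervalIntegrable (fun s => D * (1 - ν) * K
      * (2 - deriv (fun t => x₁ t * deriv x₁ t + x₂ t * deriv x₂ t) s)) volume 0 sbar :=
    (continuous_const.mul (continuous_const.sub hdercont)).intervalIntegrable 0 sbar
  have hG : ∫ s in (0:ℝ)..sbar, (x₁ s * deriv x₂ s - x₂ s * deriv x₁ s)
      = 2 * area2 x₁ x₂ sbar := by
    rw [area2]; ring
  have hIval : ∫ s in (0:ℝ)..sbar, Φ s 2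
      = C * (1 - ν) * K * area2 x₁ x₂ sbar / sbar * (2 * area2 x₁ x₂ sbar)
        + D * (1 - ν) * K * (2 * sbar) := by
    rw [intervalIntegral.integral_congr (g := fun s =>
      C * (1 - ν) * K * area2 x₁ x₂ sbar / sbar
        * (x₁ s * deriv x₂ s - x₂ s * deriv x₁ s)
      + D * (1 - ν) * K
        * (2 - deriv (fun t => x₁ t * deriv x₁ t + x₂ t * deriv x₂ t) s))
      (fun s _ => hΦ2 s)]
    rw [intervalIntegral.integral_add i1 i2, intervalIntegral.integral_const_mul,
      intervalIntegral.integral_const_mul, hG,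
      intervalIntegral.integral_sub (intervalIntegrable_const)
        (hdercont.intervalIntegrable 0 sbar),
      hFTC, hper, intervalIntegral.integral_const]
    simp only [smul_eq_mul, sub_self, sub_zero]
    ring
  -- conclusion
  have hMval : Mres C D ν x₁ x₂ sbar u 2
      = -(2 * (1 - ν) * (C * area2 x₁ x₂ sbar ^ 2 / sbar + D * sbar)) * K := by
    rw [hMres2, hIval]
    field_simp
  refine ⟨hMval, fun hne => ?_⟩
  rw [hMval]
  set T := 2 * (1 - ν) * (C * area2 x₁ x₂ sbar ^ 2 / sbar + D * sbar) with hTdef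
  constructor
  · intro hEq
    rw [eq_div_iff hne]
    linear_combination -hEq
  · intro hK
    rw [hK]
    field_simp
end
end
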